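/- arXiv:2201.00416 — 7 statements merged into one kernel-verified Lean document; each statement's English description precedes it below -/
import Mathlib

section
/- For any g, r, d with d ≥ g + r, the number of L-tableaux with parameters (g, r, d) is equal to the number of L-tableaux with parameters (g, r, g + r). -/
/-!
Every column `j ≥ g` of an L-tableau is forced to read `0, 1, …, r` from the bottom up: the red
entries of a row increase strictly from a value `≥ 1` to a value `≤ g`, so red cells lie in the
first `g` columns, and the blue entries of a column without red cells increase strictly from
a value `≥ 0` in the bottom row to a value `≤ r` in the top row, so row `i` holds exactly `i`.
Hence cutting off or appending such columns is a bijection between L-tableaux of any two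
widths `d - r ≥ g`.
-/

/-- An L-tableau with parameters (g,r,d): a filling of the (r+1)×(d−r) grid where
each cell is either red (`Sum.inl v`, value `v ∈ {1,…,g}`) or blue (`Sum.inr v`,
value `v ∈ {0,…,r}`). Rows are indexed bottom-to-top, columns left-to-right. -/
structure LTableau (g r d : ℕ) where
  entry : Fin (r+1) → Fin (d-r) → ℕ ⊕ ℕ
  red_left : ∀ (i : Fin (r+1)) (j j' : Fin (d-r)), (entry i j).isLeft → j' ≤ j → (entry i j').isLeft
  red_down : ∀ (i i' : Fin (r+1)) (j : Fin (d-r)), (entry i j).isLeft → i' ≤ i → (entry i' j).isLeft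
  red_vals : ∀ (i : Fin (r+1)) (j : Fin (d-r)) (v : ℕ), entry i j = Sum.inl v → 1 ≤ v ∧ v ≤ g
  red_content : ∀ v : ℕ, 1 ≤ v → v ≤ g →
    {p : Fin (r+1) × Fin (d-r) | entry p.1 p.2 = Sum.inl v}.ncard = r
  red_row : ∀ (i : Fin (r+1)) (j j' : Fin (d-r)) (a b : ℕ),
    entry i j = Sum.inl a → entry i j' = Sum.inl b → j < j' → a < b
  red_col : ∀ (i i' : Fin (r+1)) (j : Fin (d-r)) (a b : ℕ),
    entry i j = Sum.inl a → entry i' j = Sum.inl b → i < i' → a ≤ b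
  blue_vals : ∀ (i : Fin (r+1)) (j : Fin (d-r)) (v : ℕ), entry i j = Sum.inr v → v ≤ r
  blue_row : ∀ (i : Fin (r+1)) (j j' : Fin (d-r)) (a b : ℕ),
    entry i j = Sum.inr a → entry i j' = Sum.inr b → j < j' → a ≤ b
  blue_col : ∀ (i i' : Fin (r+1)) (j : Fin (d-r)) (a b : ℕ),
    entry i j = Sum.inr a → entry i' j = Sum.inr b → i < i' → a < b

lemma ncard_fin_prod_eq_ncard_nat_prod {ι α : Type*} (c : ι → ℕ → α) (x : α) {n : ℕ}
    (hc : ∀ i j, c i j = x → j < n) :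
    {p : ι × Fin n | c p.1 p.2 = x}.ncard = {p : ι × ℕ | c p.1 p.2 = x}.ncard := by
  have himage : Prod.map id Fin.val '' {p : ι × Fin n | c p.1 p.2 = x} =
      {p : ι × ℕ | c p.1 p.2 = x} := by
    ext ⟨i, j⟩
    refine ⟨?_, fun h ↦ ⟨(i, ⟨j, hc i j h⟩), h, rfl⟩⟩
    rintro ⟨⟨i, j⟩, h, hij⟩
    cases hij
    exact h
  rw [← himage,
    Set.ncard_image_of_injective _ (Function.injective_id.prodMap Fin.val_injective)]

namespace LTableau

variable {g r d : ℕ}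

lemma ext {T S : LTableau g r d} (h : T.entry = S.entry) : T = S := by
  cases T; cases S; cases h; rfl

lemma col_lt_of_entry_eq_inl (T : LTableau g r d) {i : Fin (r+1)} {j : Fin (d-r)} {v : ℕ}
    (h : T.entry i j = .inl v) : (j : ℕ) < v := by
  obtain ⟨j, hj⟩ := j
  induction j generalizing v with
  | zero => exact (T.red_vals _ _ _ h).1
  | succ j ih =>
    obtain ⟨u, hu⟩ := Sum.isLeft_iff.mp <|
      T.red_left i ⟨j+1, hj⟩ ⟨j, by omega⟩ (by simp [h]) (Fin.mk_le_mk.mpr j.le_succ)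
    have hju := ih (by omega) hu
    have huv := T.red_row i _ _ u v hu h (Fin.mk_lt_mk.mpr j.lt_succ_self)
    dsimp only at hju ⊢
    omega

lemma col_lt_of_entry_isLeft (T : LTableau g r d) {i : Fin (r+1)} {j : Fin (d-r)}
    (h : (T.entry i j).isLeft) : (j : ℕ) < g := by
  obtain ⟨v, hv⟩ := Sum.isLeft_iff.mp h
  exact (T.col_lt_of_entry_eq_inl hv).trans_le (T.red_vals i j v hv).2

lemma le_of_entry_eq_inr (T : LTableau g r d) {i : Fin (r+1)} {j : Fin (d-r)} {v : ℕ}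
    (h : T.entry i j = .inr v) : v ≤ i := by
  induction i using Fin.reverseInduction generalizing v with
  | last => exact T.blue_vals _ _ _ h
  | cast i ih =>
    have hblue : ¬ (T.entry i.succ j).isLeft := fun hl ↦ by
      simpa [h] using T.red_down _ i.castSucc j hl (Fin.castSucc_le_succ i)
    obtain ⟨w, hw⟩ := Sum.isRight_iff.mp (Sum.not_isLeft.mp hblue)
    have hvw := T.blue_col _ _ j v w h hw Fin.castSucc_lt_succ
    have hwi := ih hw
    simp only [Fin.val_castSucc, Fin.val_succ] at hwi ⊢
    omega

lemma entry_eq_inr_of_le (T : LTableau g r d) (i : Fin (r+1)) {j : Fin (d-r)}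
    (hj : g ≤ (j : ℕ)) : T.entry i j = .inr i := by
  have hblue (i : Fin (r+1)) : ∃ w, T.entry i j = .inr w :=
    Sum.isRight_iff.mp (Sum.not_isLeft.mp fun hl ↦ (T.col_lt_of_entry_isLeft hl).not_ge hj)
  obtain ⟨w, hw⟩ := hblue i
  suffices (i : ℕ) ≤ w by rw [hw, le_antisymm (T.le_of_entry_eq_inr hw) this]
  induction i using Fin.induction generalizing w with
  | zero => exact Nat.zero_le w
  | succ i ih =>
    obtain ⟨u, hu⟩ := hblue i.castSucc
    have := T.blue_col _ _ j u w hu hw Fin.castSucc_lt_succ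
    have := ih u hu
    simp only [Fin.val_castSucc, Fin.val_succ] at this ⊢
    omega

/-- The entries of `T` as a function of a column index in `ℕ`, continued past the last column
by the value `Sum.inr i` that `entry_eq_inr_of_le` forces in every column `j ≥ g`. -/
def cell (T : LTableau g r d) (i : Fin (r+1)) (j : ℕ) : ℕ ⊕ ℕ :=
  if hj : j < d - r then T.entry i ⟨j, hj⟩ else .inr i

lemma cell_of_lt (T : LTableau g r d) (i : Fin (r+1)) {j : ℕ} (hj : j < d - r) :
    T.cell i j = T.entry i ⟨j, hj⟩ :=
  dif_pos hj

lemma cell_of_ge (T : LTableau g r d) (i : Fin (r+1)) {j : ℕ} (hj : d - r ≤ j) :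
    T.cell i j = .inr i :=
  dif_neg hj.not_gt

@[simp]
lemma cell_val (T : LTableau g r d) (i : Fin (r+1)) (j : Fin (d-r)) : T.cell i j = T.entry i j :=
  T.cell_of_lt i j.isLt

lemma lt_of_cell_isLeft (T : LTableau g r d) {i : Fin (r+1)} {j : ℕ}
    (h : (T.cell i j).isLeft) : j < d - r := by
  by_contra hj
  simp [T.cell_of_ge i (not_lt.mp hj)] at h

lemma cell_of_le (T : LTableau g r d) (i : Fin (r+1)) {j : ℕ} (hj : g ≤ j) :
    T.cell i j = .inr i := by
  by_cases hjd : j < d - r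
  · rw [T.cell_of_lt i hjd, T.entry_eq_inr_of_le i hj]
  · exact T.cell_of_ge i (not_lt.mp hjd)

lemma cell_injective : Function.Injective (cell : LTableau g r d → _) := by
  intro T S h
  exact ext (funext₂ fun i j ↦ by simpa using congrFun₂ h i j)

lemma ncard_cell_eq_inl (T : LTableau g r d) {n : ℕ} (hn : g ≤ n) {v : ℕ} (hv₁ : 1 ≤ v)
    (hv₂ : v ≤ g) :
    {p : Fin (r+1) × Fin n | T.cell p.1 p.2 = .inl v}.ncard = r := by
  have hred : ∀ i j, T.cell i j = .inl v → j < d - r :=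
    fun i j h ↦ T.lt_of_cell_isLeft (by rw [h]; rfl)
  rw [ncard_fin_prod_eq_ncard_nat_prod T.cell _ _,
    ← ncard_fin_prod_eq_ncard_nat_prod T.cell _ hred]
  · simpa using T.red_content v hv₁ hv₂
  · intro i j h
    by_contra hj
    simp [T.cell_of_le i (hn.trans (not_lt.mp hj))] at h

/-- `T` cut off, or continued by its forced columns, to width `d' - r`. -/
def resize (T : LTableau g r d) {d' : ℕ} (h' : g + r ≤ d') : LTableau g r d' where
  entry i j := T.cell i j
  red_left i j j' hl hle := by
    have hj := T.lt_of_cell_isLeft hl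
    have hj' : (j' : ℕ) < d - r := lt_of_le_of_lt hle hj
    rw [T.cell_of_lt i hj] at hl
    rw [T.cell_of_lt i hj']
    exact T.red_left i _ _ hl hle
  red_down i i' j hl hle := by
    have hj := T.lt_of_cell_isLeft hl
    rw [T.cell_of_lt i hj] at hl
    rw [T.cell_of_lt i' hj]
    exact T.red_down i i' _ hl hle
  red_vals i j v hv := by
    have hj := T.lt_of_cell_isLeft (i := i) (j := j) (by rw [hv]; rfl)
    rw [T.cell_of_lt i hj] at hv
    exact T.red_vals i _ v hv
  red_content v hv₁ hv₂ := T.ncard_cell_eq_inl (by omega) hv₁ hv₂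
  red_row i j j' a b ha hb hlt := by
    have hj := T.lt_of_cell_isLeft (i := i) (j := j) (by rw [ha]; rfl)
    have hj' := T.lt_of_cell_isLeft (i := i) (j := j') (by rw [hb]; rfl)
    rw [T.cell_of_lt i hj] at ha
    rw [T.cell_of_lt i hj'] at hb
    exact T.red_row i _ _ a b ha hb hlt
  red_col i i' j a b ha hb hlt := by
    have hj := T.lt_of_cell_isLeft (i := i) (j := j) (by rw [ha]; rfl)
    rw [T.cell_of_lt i hj] at ha
    rw [T.cell_of_lt i' hj] at hb
    exact T.red_col i i' _ a b ha hb hlt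
  blue_vals i j v hv := by
    by_cases hj : (j : ℕ) < d - r
    · rw [T.cell_of_lt i hj] at hv
      exact T.blue_vals i _ v hv
    · rw [T.cell_of_ge i (not_lt.mp hj), Sum.inr.injEq] at hv
      omega
  blue_row i j j' a b ha hb hlt := by
    by_cases hj' : (j' : ℕ) < d - r
    · have hj : (j : ℕ) < d - r := lt_trans hlt hj'
      rw [T.cell_of_lt i hj] at ha
      rw [T.cell_of_lt i hj'] at hb
      exact T.blue_row i _ _ a b ha hb hlt
    · rw [T.cell_of_ge i (not_lt.mp hj'), Sum.inr.injEq] at hb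
      by_cases hj : (j : ℕ) < d - r
      · rw [T.cell_of_lt i hj] at ha
        exact hb ▸ T.le_of_entry_eq_inr ha
      · rw [T.cell_of_ge i (not_lt.mp hj), Sum.inr.injEq] at ha
        omega
  blue_col i i' j a b ha hb hlt := by
    by_cases hj : (j : ℕ) < d - r
    · rw [T.cell_of_lt i hj] at ha
      rw [T.cell_of_lt i' hj] at hb
      exact T.blue_col i i' _ a b ha hb hlt
    · rw [T.cell_of_ge i (not_lt.mp hj), Sum.inr.injEq] at ha
      rw [T.cell_of_ge i' (not_lt.mp hj), Sum.inr.injEq] at hb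
      omega

lemma cell_resize (T : LTableau g r d) {d' : ℕ} (h' : g + r ≤ d') :
    (T.resize h').cell = T.cell := by
  funext i j
  by_cases hj : j < d' - r
  · exact (T.resize h').cell_of_lt i hj
  · rw [(T.resize h').cell_of_ge i (not_lt.mp hj), T.cell_of_le i (by omega)]

def resizeEquiv {d' : ℕ} (h : g + r ≤ d) (h' : g + r ≤ d') :
    LTableau g r d ≃ LTableau g r d' where
  toFun T := T.resize h'
  invFun T := T.resize h
  left_inv T := cell_injective (by rw [cell_resize, cell_resize])
  right_inv T := cell_injective (by rw [cell_resize, cell_resize])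

end LTableau

/-- Truncation: for d ≥ g + r, the number of L-tableaux with parameters (g,r,d)
equals the number with parameters (g,r,g+r). -/
theorem stmt_1 (g r d : ℕ) (h : g + r ≤ d) :
    Nat.card (LTableau g r d) = Nat.card (LTableau g r (g + r)) :=
  Nat.card_congr (LTableau.resizeEquiv h le_rfl)
end

section
/- There is a bijection φ from the set TrSSYT(g,r) of transposed SSYT of content (r^g) and height ≤ r+1 to the set of 180°-rotated standard Young tableaux of size g and height ≤ r+1; moreover, for every R in TrSSYT(g,r), the shapes of R and φ(R) are complementary in an (r+1)×g rectangle. -/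
/-- A transposed semistandard Young tableau with at most r+1 rows and content (i^g):
rows strictly increase left to right, columns weakly increase bottom to top,
each of 1,…,g appears exactly i times. Cells are `some v` (filled) or `none`. -/
structure TrSSYT (g r i : ℕ) where
  entry : Fin (r+1) → ℕ → Option ℕ
  left : ∀ (row : Fin (r+1)) (j j' : ℕ), (entry row j).isSome → j' ≤ j → (entry row j').isSome
  down : ∀ (row row' : Fin (r+1)) (j : ℕ), (entry row j).isSome → row' ≤ row → (entry row' j).isSome
  vals : ∀ (row : Fin (r+1)) (j : ℕ) (v : ℕ), entry row j = some v → 1 ≤ v ∧ v ≤ g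
  content : ∀ v : ℕ, 1 ≤ v → v ≤ g →
    {p : Fin (r+1) × ℕ | entry p.1 p.2 = some v}.ncard = i
  row_strict : ∀ (row : Fin (r+1)) (j j' : ℕ) (a b : ℕ),
    entry row j = some a → entry row j' = some b → j < j' → a < b
  col_weak : ∀ (row row' : Fin (r+1)) (j : ℕ) (a b : ℕ),
    entry row j = some a → entry row' j = some b → row < row' → a ≤ b

/-- A 180°-rotated standard Young tableau of size g, placed right-and-top justified
in an (r+1)×g rectangle: each of 1,…,g appears exactly once, and both rows
(left to right) and columns (bottom to top) are strictly decreasing. -/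
structure RotSYT (g r : ℕ) where
  entry : Fin (r+1) → Fin g → Option ℕ
  right : ∀ (i : Fin (r+1)) (j j' : Fin g), (entry i j).isSome → j ≤ j' → (entry i j').isSome
  up : ∀ (i i' : Fin (r+1)) (j : Fin g), (entry i j).isSome → i ≤ i' → (entry i' j).isSome
  vals : ∀ (i : Fin (r+1)) (j : Fin g) (v : ℕ), entry i j = some v → 1 ≤ v ∧ v ≤ g
  content : ∀ v : ℕ, 1 ≤ v → v ≤ g → ∃! p : Fin (r+1) × Fin g, entry p.1 p.2 = some v
  row_dec : ∀ (i : Fin (r+1)) (j j' : Fin g) (a b : ℕ),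
    entry i j = some a → entry i j' = some b → j < j' → b < a
  col_dec : ∀ (i i' : Fin (r+1)) (j : Fin g) (a b : ℕ),
    entry i j = some a → entry i' j = some b → i < i' → b < a

/-!
Both kinds of tableaux are encoded by the same data: a map `f` sending each value
`v ∈ [1, g]` to a row. For a transposed SSYT `R`, `f v` is the unique row of `R` missing `v`;
for a rotated SYT `Q`, `f v` is the row of `Q` containing `v`. Rows are strictly monotone, so
each row is the sorted enumeration of its set of values and the tableau is determined by `f`.
Entrywise comparison of two sorted enumerations is equivalent to comparison of their prefix
counts, so the column conditions on either side both become the ballot condition on `f`: for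
`ρ ≤ ρ'`, among `1, …, v` row `ρ'` receives at least as many values as row `ρ`. Row `ρ` of `R`
has length `#{v | f v ≠ ρ}` and row `ρ` of `Q` has length `#{v | f v = ρ}`, which add up to `g`.
-/

open Finset

structure IsSortedEnum (A : Finset ℕ) (e : ℕ → Option ℕ) : Prop where
  isSome_of_le : ∀ j j', (e j).isSome → j' ≤ j → (e j').isSome
  lt_of_lt : ∀ j j' a b, e j = some a → e j' = some b → j < j' → a < b
  mem : ∀ {j a}, e j = some a → a ∈ A
  exists_eq : ∀ a ∈ A, ∃ j, e j = some a

def sortedRow (A : Finset ℕ) (j : ℕ) : Option ℕ := (A.sort (· ≤ ·))[j]?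

lemma isSome_sortedRow_iff {A : Finset ℕ} {j : ℕ} : (sortedRow A j).isSome ↔ j < #A := by
  simp [sortedRow]

lemma isSortedEnum_sortedRow (A : Finset ℕ) : IsSortedEnum A (sortedRow A) where
  isSome_of_le j j' hj hle := by
    rw [isSome_sortedRow_iff] at hj ⊢
    omega
  lt_of_lt j j' a b ha hb hlt := by
    obtain ⟨hj, rfl⟩ := List.getElem?_eq_some_iff.mp ha
    obtain ⟨hj', rfl⟩ := List.getElem?_eq_some_iff.mp hb
    exact (sortedLT_sort A).getElem_lt_getElem_of_lt hlt
  mem h := (mem_sort _).mp (List.mem_of_getElem? h)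
  exists_eq a ha := List.mem_iff_getElem?.mp ((mem_sort _).mpr ha)

lemma exists_sortedRow_eq_some_iff {A : Finset ℕ} {a : ℕ} :
    (∃ j, sortedRow A j = some a) ↔ a ∈ A :=
  ⟨fun ⟨_, h⟩ => (isSortedEnum_sortedRow A).mem h, (isSortedEnum_sortedRow A).exists_eq a⟩

namespace IsSortedEnum

variable {A B : Finset ℕ} {e e' : ℕ → Option ℕ}

lemma index_eq_of_eq_some (h : IsSortedEnum A e) {j j' v : ℕ} (hj : e j = some v)
    (hj' : e j' = some v) : j = j' := by
  by_contra hne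
  rcases Nat.lt_or_gt_of_ne hne with hlt | hlt
  · exact (h.lt_of_lt _ _ _ _ hj hj' hlt).false
  · exact (h.lt_of_lt _ _ _ _ hj' hj hlt).false

lemma exists_eq_some_of_le (h : IsSortedEnum A e) {j k v : ℕ} (hj : e j = some v) (hk : k ≤ j) :
    ∃ a, e k = some a :=
  Option.isSome_iff_exists.mp (h.isSome_of_le j k (Option.isSome_of_eq_some hj) hk)

lemma card_filter_lt (h : IsSortedEnum A e) {j v : ℕ} (hj : e j = some v) :
    #(A.filter (· < v)) = j := by
  have hprefix : A.filter (· < v) = (range j).image (fun k => (e k).getD 0) := by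
    ext u
    simp only [mem_filter, mem_image, mem_range]
    constructor
    · rintro ⟨hu, huv⟩
      obtain ⟨k, hk⟩ := h.exists_eq u hu
      refine ⟨k, ?_, by simp [hk]⟩
      by_contra! hjk
      rcases hjk.eq_or_lt with rfl | hlt
      · exact huv.ne (Option.some_injective _ (hk.symm.trans hj))
      · exact (h.lt_of_lt _ _ _ _ hj hk hlt).asymm huv
    · rintro ⟨k, hk, rfl⟩
      obtain ⟨a, ha⟩ := h.exists_eq_some_of_le hj hk.le
      simpa [ha] using ⟨h.mem ha, h.lt_of_lt _ _ _ _ ha hj hk⟩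
  rw [hprefix, card_image_of_injOn, card_range]
  intro k hk k' hk' hkk'
  simp only [coe_range, Set.mem_Iio] at hk hk'
  obtain ⟨a, ha⟩ := h.exists_eq_some_of_le hj hk.le
  obtain ⟨b, hb⟩ := h.exists_eq_some_of_le hj hk'.le
  simp only [ha, hb, Option.getD_some] at hkk'
  exact h.index_eq_of_eq_some ha (hkk' ▸ hb)

lemma eq_sortedRow (h : IsSortedEnum A e) : e = sortedRow A := by
  have key : ∀ {e₁ e₂}, IsSortedEnum A e₁ → IsSortedEnum A e₂ →
      ∀ j a, e₁ j = some a → e₂ j = some a := by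
    intro e₁ e₂ h h' j a ha
    obtain ⟨j', hj'⟩ := h'.exists_eq a (h.mem ha)
    rwa [← h.card_filter_lt ha, h'.card_filter_lt hj']
  funext j
  exact Option.ext fun a =>
    ⟨key h (isSortedEnum_sortedRow A) j a, key (isSortedEnum_sortedRow A) h j a⟩

lemma lt_card_filter_le_iff (h : IsSortedEnum A e) {j v : ℕ} :
    j < #(A.filter (· ≤ v)) ↔ ∃ a, e j = some a ∧ a ≤ v := by
  constructor
  · intro hj
    have hjA : j < #A := hj.trans_le (card_filter_le _ _)
    rw [h.eq_sortedRow]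
    obtain ⟨a, ha⟩ := Option.isSome_iff_exists.mp (isSome_sortedRow_iff.mpr hjA)
    refine ⟨a, ha, ?_⟩
    by_contra! hva
    have hsub : A.filter (· ≤ v) ⊆ A.filter (· < a) :=
      monotone_filter_right _ fun _ _ huv => huv.trans_lt hva
    have := (isSortedEnum_sortedRow A).card_filter_lt ha
    have := card_le_card hsub
    omega
  · rintro ⟨a, ha, hav⟩
    have hsub : insert a (A.filter (· < a)) ⊆ A.filter (· ≤ v) := by
      refine insert_subset (mem_filter.mpr ⟨h.mem ha, hav⟩) ?_
      exact monotone_filter_right _ fun _ _ hua => hua.le.trans hav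
    have := card_le_card hsub
    rw [card_insert_of_notMem (by simp), h.card_filter_lt ha] at this
    omega

lemma card_filter_le_le_iff (hA : IsSortedEnum A e) (hB : IsSortedEnum B e') :
    (∀ v, #(A.filter (· ≤ v)) ≤ #(B.filter (· ≤ v))) ↔
      ∀ j a, e j = some a → ∃ b, e' j = some b ∧ b ≤ a := by
  constructor
  · intro hcard j a ha
    exact hB.lt_card_filter_le_iff.mp
      ((hA.lt_card_filter_le_iff.mpr ⟨a, ha, le_rfl⟩).trans_le (hcard a))
  · intro hentry v
    by_contra! hlt
    obtain ⟨a, ha, hav⟩ := hA.lt_card_filter_le_iff.mp hlt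
    obtain ⟨b, hb, hba⟩ := hentry _ a ha
    exact (hB.lt_card_filter_le_iff.mpr ⟨b, hb, hba.trans hav⟩).false

end IsSortedEnum

lemma exists_sortedRow_eq_some_le {A B : Finset ℕ}
    (h : ∀ v, #(A.filter (· ≤ v)) ≤ #(B.filter (· ≤ v))) {j a : ℕ} (ha : sortedRow A j = some a) :
    ∃ b, sortedRow B j = some b ∧ b ≤ a :=
  ((isSortedEnum_sortedRow A).card_filter_le_le_iff (isSortedEnum_sortedRow B)).mp h j a ha

section Ballot

variable {g r : ℕ}

def fiber (g : ℕ) (f : ℕ → Fin (r + 1)) (ρ : Fin (r + 1)) : Finset ℕ :=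
  (Icc 1 g).filter (f · = ρ)

def cofiber (g : ℕ) (f : ℕ → Fin (r + 1)) (ρ : Fin (r + 1)) : Finset ℕ :=
  (Icc 1 g).filter (f · ≠ ρ)

lemma mem_fiber {f : ℕ → Fin (r + 1)} {ρ : Fin (r + 1)} {v : ℕ} :
    v ∈ fiber g f ρ ↔ v ∈ Icc 1 g ∧ f v = ρ :=
  mem_filter

lemma mem_cofiber {f : ℕ → Fin (r + 1)} {ρ : Fin (r + 1)} {v : ℕ} :
    v ∈ cofiber g f ρ ↔ v ∈ Icc 1 g ∧ f v ≠ ρ :=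
  mem_filter

lemma card_filter_fiber_add_card_filter_cofiber (f : ℕ → Fin (r + 1)) (ρ : Fin (r + 1))
    (p : ℕ → Prop) [DecidablePred p] :
    #((fiber g f ρ).filter p) + #((cofiber g f ρ).filter p) = #((Icc 1 g).filter p) := by
  rw [fiber, cofiber, filter_comm, filter_comm (f · ≠ ρ)]
  exact card_filter_add_card_filter_not _

lemma card_fiber_add_card_cofiber (f : ℕ → Fin (r + 1)) (ρ : Fin (r + 1)) :
    #(fiber g f ρ) + #(cofiber g f ρ) = g := by
  simpa using card_filter_fiber_add_card_filter_cofiber (g := g) f ρ (fun _ => True)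

lemma card_fiber_le {f : ℕ → Fin (r + 1)} {ρ : Fin (r + 1)} : #(fiber g f ρ) ≤ g :=
  (card_filter_le _ _).trans (by simp)

lemma fiber_congr {f f' : ℕ → Fin (r + 1)} (h : Set.EqOn f f' (Icc 1 g)) :
    fiber g f = fiber g f' :=
  funext fun _ => filter_congr fun v hv => by rw [h hv]

lemma cofiber_congr {f f' : ℕ → Fin (r + 1)} (h : Set.EqOn f f' (Icc 1 g)) :
    cofiber g f = cofiber g f' :=
  funext fun _ => filter_congr fun v hv => by rw [h hv]

def IsBallot (g : ℕ) (f : ℕ → Fin (r + 1)) : Prop :=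
  ∀ ρ ρ', ρ ≤ ρ' → ∀ v, #((fiber g f ρ).filter (· ≤ v)) ≤ #((fiber g f ρ').filter (· ≤ v))

lemma isBallot_iff_cofiber {f : ℕ → Fin (r + 1)} :
    IsBallot g f ↔ ∀ ρ ρ', ρ ≤ ρ' →
      ∀ v, #((cofiber g f ρ').filter (· ≤ v)) ≤ #((cofiber g f ρ).filter (· ≤ v)) := by
  refine forall₄_congr fun ρ ρ' _ v => ?_
  have := card_filter_fiber_add_card_filter_cofiber (g := g) f ρ (· ≤ v)
  have := card_filter_fiber_add_card_filter_cofiber (g := g) f ρ' (· ≤ v)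
  omega

end Ballot

lemma ncard_setOf_entry_eq_some {ι : Type*} (e : ι → ℕ → Option ℕ)
    (hrow : ∀ ρ j j' a b, e ρ j = some a → e ρ j' = some b → j < j' → a < b) (v : ℕ) :
    {p : ι × ℕ | e p.1 p.2 = some v}.ncard = {ρ | ∃ j, e ρ j = some v}.ncard := by
  have hinj : Set.InjOn Prod.fst {p : ι × ℕ | e p.1 p.2 = some v} := by
    rintro ⟨ρ, j⟩ hj ⟨_, j'⟩ hj' rfl
    by_contra hne
    rcases Nat.lt_or_gt_of_ne (fun h => hne (Prod.ext rfl h)) with hlt | hlt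
    · exact (hrow ρ _ _ _ _ hj hj' hlt).false
    · exact (hrow ρ _ _ _ _ hj' hj hlt).false
  rw [← hinj.ncard_image]
  congr 1
  ext ρ
  simp

namespace TrSSYT

variable {g r : ℕ}

lemma ext {R R' : TrSSYT g r r} (h : R.entry = R'.entry) : R = R' := by
  cases R; cases R'; cases h; rfl

/-- Each value occurs `r` times, at most once per row, in `r + 1` rows. -/
lemma exists_row_forall_ne_iff (R : TrSSYT g r r) {v : ℕ} (hv : v ∈ Icc 1 g) :
    ∃ ρ₀, ∀ ρ, (∀ j, R.entry ρ j ≠ some v) ↔ ρ = ρ₀ := by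
  have hv := mem_Icc.mp hv
  have hrows : {ρ | ∃ j, R.entry ρ j = some v}.ncard = r := by
    rw [← ncard_setOf_entry_eq_some _ R.row_strict, R.content v hv.1 hv.2]
  have hmissing : {ρ | ∃ j, R.entry ρ j = some v}ᶜ.ncard = 1 := by
    rw [Set.ncard_compl, hrows]
    simp
  obtain ⟨ρ₀, hρ₀⟩ := Set.ncard_eq_one.mp hmissing
  refine ⟨ρ₀, fun ρ => ?_⟩
  rw [← Set.mem_singleton_iff, ← hρ₀]
  simp

noncomputable def missingRow (R : TrSSYT g r r) (v : ℕ) : Fin (r + 1) :=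
  Classical.epsilon fun ρ => ∀ j, R.entry ρ j ≠ some v

lemma exists_entry_eq_some_iff (R : TrSSYT g r r) {v : ℕ} (hv : v ∈ Icc 1 g) {ρ : Fin (r + 1)} :
    (∃ j, R.entry ρ j = some v) ↔ ρ ≠ R.missingRow v := by
  obtain ⟨ρ₀, hρ₀⟩ := R.exists_row_forall_ne_iff hv
  have hmissing : R.missingRow v = ρ₀ :=
    (hρ₀ _).mp (Classical.epsilon_spec (p := fun ρ => ∀ j, R.entry ρ j ≠ some v)
      ⟨ρ₀, (hρ₀ ρ₀).mpr rfl⟩)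
  rw [hmissing, ne_eq, ← (hρ₀ ρ).not, not_forall_not]

lemma isSortedEnum_entry (R : TrSSYT g r r) (ρ : Fin (r + 1)) :
    IsSortedEnum (cofiber g R.missingRow ρ) (R.entry ρ) where
  isSome_of_le := R.left ρ
  lt_of_lt := R.row_strict ρ
  mem {j a} h := by
    have ha := mem_Icc.mpr (R.vals ρ j a h)
    exact mem_cofiber.mpr ⟨ha, ((R.exists_entry_eq_some_iff ha).mp ⟨j, h⟩).symm⟩
  exists_eq a ha := by
    obtain ⟨ha, hne⟩ := mem_cofiber.mp ha
    exact (R.exists_entry_eq_some_iff ha).mpr (Ne.symm hne)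

lemma entry_eq_sortedRow (R : TrSSYT g r r) (ρ : Fin (r + 1)) :
    R.entry ρ = sortedRow (cofiber g R.missingRow ρ) :=
  (R.isSortedEnum_entry ρ).eq_sortedRow

lemma isBallot_missingRow (R : TrSSYT g r r) : IsBallot g R.missingRow := by
  refine isBallot_iff_cofiber.mpr fun ρ ρ' hle => ?_
  refine ((R.isSortedEnum_entry ρ').card_filter_le_le_iff (R.isSortedEnum_entry ρ)).mpr ?_
  intro j b hb
  rcases hle.eq_or_lt with rfl | hlt
  · exact ⟨b, hb, le_rfl⟩
  obtain ⟨a, ha⟩ := Option.isSome_iff_exists.mp (R.down ρ' ρ j (Option.isSome_of_eq_some hb) hle)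
  exact ⟨a, ha, R.col_weak ρ ρ' j a b ha hb hlt⟩

noncomputable def ofBallot (f : ℕ → Fin (r + 1)) (hf : IsBallot g f) : TrSSYT g r r where
  entry ρ := sortedRow (cofiber g f ρ)
  left ρ := (isSortedEnum_sortedRow _).isSome_of_le
  down ρ ρ' j hj hle := by
    obtain ⟨a, ha⟩ := Option.isSome_iff_exists.mp hj
    obtain ⟨b, hb, -⟩ := exists_sortedRow_eq_some_le (isBallot_iff_cofiber.mp hf ρ' ρ hle) ha
    exact Option.isSome_of_eq_some hb
  vals ρ j v h := mem_Icc.mp (mem_cofiber.mp ((isSortedEnum_sortedRow _).mem h)).1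
  content v hv₁ hv₂ := by
    rw [ncard_setOf_entry_eq_some _ fun ρ => (isSortedEnum_sortedRow _).lt_of_lt]
    have hrows : {ρ | ∃ j, sortedRow (cofiber g f ρ) j = some v} = {f v}ᶜ := by
      ext ρ
      simp [exists_sortedRow_eq_some_iff, mem_cofiber, hv₁, hv₂, eq_comm]
    rw [hrows, Set.ncard_compl]
    simp
  row_strict ρ := (isSortedEnum_sortedRow _).lt_of_lt
  col_weak ρ ρ' j a b ha hb hlt := by
    obtain ⟨a', ha', ha'b⟩ :=
      exists_sortedRow_eq_some_le (isBallot_iff_cofiber.mp hf ρ ρ' hlt.le) hb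
    obtain rfl : a' = a := Option.some_injective _ (ha'.symm.trans ha)
    exact ha'b

lemma missingRow_ofBallot {f : ℕ → Fin (r + 1)} (hf : IsBallot g f) {v : ℕ} (hv : v ∈ Icc 1 g) :
    (ofBallot f hf).missingRow v = f v := by
  by_contra hne
  have hmem := exists_sortedRow_eq_some_iff.mp
    (((ofBallot f hf).exists_entry_eq_some_iff hv).mpr (Ne.symm hne))
  exact (mem_cofiber.mp hmem).2 rfl

lemma ofBallot_missingRow (R : TrSSYT g r r) : ofBallot R.missingRow R.isBallot_missingRow = R :=
  ext (funext fun ρ => (R.entry_eq_sortedRow ρ).symm)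

lemma ofBallot_congr {f f' : ℕ → Fin (r + 1)} (hf : IsBallot g f) (hf' : IsBallot g f')
    (h : Set.EqOn f f' (Icc 1 g)) : ofBallot f hf = ofBallot f' hf' :=
  ext (funext fun ρ => by simp only [ofBallot, cofiber_congr h])

end TrSSYT

namespace RotSYT

variable {g r : ℕ}

lemma ext {Q Q' : RotSYT g r} (h : Q.entry = Q'.entry) : Q = Q' := by
  cases Q; cases Q'; cases h; rfl

noncomputable def rowOf (Q : RotSYT g r) (v : ℕ) : Fin (r + 1) :=
  Classical.epsilon fun ρ => ∃ j, Q.entry ρ j = some v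

lemma exists_entry_eq_some_iff (Q : RotSYT g r) {v : ℕ} (hv : v ∈ Icc 1 g) {ρ : Fin (r + 1)} :
    (∃ j, Q.entry ρ j = some v) ↔ ρ = Q.rowOf v := by
  have hv := mem_Icc.mp hv
  obtain ⟨p, hp, huniq⟩ := Q.content v hv.1 hv.2
  have hrowOf : ∃ j, Q.entry (Q.rowOf v) j = some v :=
    Classical.epsilon_spec (p := fun ρ => ∃ j, Q.entry ρ j = some v) ⟨p.1, p.2, hp⟩
  refine ⟨fun ⟨j, hj⟩ => ?_, fun h => h ▸ hrowOf⟩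
  obtain ⟨j', hj'⟩ := hrowOf
  exact congrArg Prod.fst ((huniq (ρ, j) hj).trans (huniq (Q.rowOf v, j') hj').symm)

def revRow (Q : RotSYT g r) (ρ : Fin (r + 1)) (k : ℕ) : Option ℕ :=
  if h : k < g then Q.entry ρ (Fin.rev ⟨k, h⟩) else none

lemma entry_eq_revRow (Q : RotSYT g r) (ρ : Fin (r + 1)) (j : Fin g) :
    Q.entry ρ j = Q.revRow ρ j.rev := by
  rw [revRow, dif_pos j.rev.isLt, Fin.eta, Fin.rev_rev]

lemma isSortedEnum_revRow (Q : RotSYT g r) (ρ : Fin (r + 1)) :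
    IsSortedEnum (fiber g Q.rowOf ρ) (Q.revRow ρ) where
  isSome_of_le k k' hk hle := by
    unfold revRow at hk ⊢
    split_ifs at hk with hkg
    · rw [dif_pos (hle.trans_lt hkg)]
      exact Q.right ρ _ _ hk (Fin.rev_le_rev.mpr (Fin.mk_le_mk.mpr hle))
    · simp at hk
  lt_of_lt k k' a b ha hb hlt := by
    unfold revRow at ha hb
    split_ifs at ha hb
    exact Q.row_dec ρ _ _ b a hb ha (Fin.rev_lt_rev.mpr (Fin.mk_lt_mk.mpr hlt))
  mem {k a} h := by
    unfold revRow at h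
    split_ifs at h
    have ha := mem_Icc.mpr (Q.vals ρ _ a h)
    exact mem_fiber.mpr ⟨ha, ((Q.exists_entry_eq_some_iff ha).mp ⟨_, h⟩).symm⟩
  exists_eq a ha := by
    obtain ⟨ha, hρ⟩ := mem_fiber.mp ha
    obtain ⟨j, hj⟩ := (Q.exists_entry_eq_some_iff ha).mpr hρ.symm
    exact ⟨j.rev, Q.entry_eq_revRow ρ j ▸ hj⟩

lemma entry_eq_sortedRow (Q : RotSYT g r) (ρ : Fin (r + 1)) (j : Fin g) :
    Q.entry ρ j = sortedRow (fiber g Q.rowOf ρ) j.rev := by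
  rw [entry_eq_revRow, (Q.isSortedEnum_revRow ρ).eq_sortedRow]

lemma isBallot_rowOf (Q : RotSYT g r) : IsBallot g Q.rowOf := by
  intro ρ ρ' hle
  refine ((Q.isSortedEnum_revRow ρ).card_filter_le_le_iff (Q.isSortedEnum_revRow ρ')).mpr ?_
  intro k a ha
  rcases hle.eq_or_lt with rfl | hlt
  · exact ⟨a, ha, le_rfl⟩
  unfold revRow at ha ⊢
  split_ifs at ha ⊢ with hkg
  obtain ⟨b, hb⟩ := Option.isSome_iff_exists.mp (Q.up ρ ρ' _ (Option.isSome_of_eq_some ha) hle)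
  exact ⟨b, hb, (Q.col_dec ρ ρ' _ a b ha hb hlt).le⟩

lemma exists_sortedRow_fiber_rev_eq_some_iff {f : ℕ → Fin (r + 1)} {ρ : Fin (r + 1)} {v : ℕ} :
    (∃ j : Fin g, sortedRow (fiber g f ρ) j.rev = some v) ↔ v ∈ fiber g f ρ := by
  rw [← exists_sortedRow_eq_some_iff]
  refine ⟨fun ⟨j, hj⟩ => ⟨_, hj⟩, fun ⟨k, hk⟩ => ?_⟩
  have hkg : k < g :=
    (isSome_sortedRow_iff.mp (Option.isSome_of_eq_some hk)).trans_le card_fiber_le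
  exact ⟨Fin.rev ⟨k, hkg⟩, by rwa [Fin.rev_rev]⟩

noncomputable def ofBallot (f : ℕ → Fin (r + 1)) (hf : IsBallot g f) : RotSYT g r where
  entry ρ j := sortedRow (fiber g f ρ) j.rev
  right ρ j j' hj hle := by
    rw [isSome_sortedRow_iff] at hj ⊢
    have := Fin.rev_le_rev.mpr hle
    omega
  up ρ ρ' j hj hle := by
    obtain ⟨a, ha⟩ := Option.isSome_iff_exists.mp hj
    obtain ⟨b, hb, -⟩ := exists_sortedRow_eq_some_le (hf ρ ρ' hle) ha
    exact Option.isSome_of_eq_some hb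
  vals ρ j v h := mem_Icc.mp (mem_fiber.mp ((isSortedEnum_sortedRow _).mem h)).1
  content v hv₁ hv₂ := by
    obtain ⟨j, hj⟩ :=
      exists_sortedRow_fiber_rev_eq_some_iff.mpr (mem_fiber.mpr ⟨mem_Icc.mpr ⟨hv₁, hv₂⟩, rfl⟩)
    refine ⟨(f v, j), hj, ?_⟩
    rintro ⟨ρ, j'⟩ hj'
    obtain rfl : f v = ρ := (mem_fiber.mp ((isSortedEnum_sortedRow _).mem hj')).2
    have := (isSortedEnum_sortedRow _).index_eq_of_eq_some hj' hj
    exact Prod.ext rfl (Fin.rev_injective (Fin.ext this))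
  row_dec ρ j j' a b ha hb hlt :=
    (isSortedEnum_sortedRow _).lt_of_lt _ _ b a hb ha (Fin.rev_lt_rev.mpr hlt)
  col_dec ρ ρ' j a b ha hb hlt := by
    obtain ⟨b', hb', hba⟩ := exists_sortedRow_eq_some_le (hf ρ ρ' hlt.le) ha
    obtain rfl : b' = b := Option.some_injective _ (hb'.symm.trans hb)
    refine hba.lt_of_ne fun hab => hlt.ne ?_
    rw [← (mem_fiber.mp ((isSortedEnum_sortedRow _).mem ha)).2,
      ← (mem_fiber.mp ((isSortedEnum_sortedRow _).mem hb)).2, hab]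

lemma rowOf_ofBallot {f : ℕ → Fin (r + 1)} (hf : IsBallot g f) {v : ℕ} (hv : v ∈ Icc 1 g) :
    (ofBallot f hf).rowOf v = f v :=
  (((ofBallot f hf).exists_entry_eq_some_iff hv).mp
    (exists_sortedRow_fiber_rev_eq_some_iff.mpr (mem_fiber.mpr ⟨hv, rfl⟩))).symm

lemma ofBallot_rowOf (Q : RotSYT g r) : ofBallot Q.rowOf Q.isBallot_rowOf = Q :=
  ext (funext fun ρ => funext fun j => (Q.entry_eq_sortedRow ρ j).symm)

lemma ofBallot_congr {f f' : ℕ → Fin (r + 1)} (hf : IsBallot g f) (hf' : IsBallot g f')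
    (h : Set.EqOn f f' (Icc 1 g)) : ofBallot f hf = ofBallot f' hf' :=
  ext (funext fun ρ => by simp only [ofBallot, fiber_congr h])

end RotSYT

noncomputable def TrSSYT.equivRotSYT (g r : ℕ) : TrSSYT g r r ≃ RotSYT g r where
  toFun R := RotSYT.ofBallot R.missingRow R.isBallot_missingRow
  invFun Q := TrSSYT.ofBallot Q.rowOf Q.isBallot_rowOf
  left_inv R := by
    dsimp only
    rw [TrSSYT.ofBallot_congr _ R.isBallot_missingRow
      fun v hv => RotSYT.rowOf_ofBallot R.isBallot_missingRow hv, TrSSYT.ofBallot_missingRow]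
  right_inv Q := by
    dsimp only
    rw [RotSYT.ofBallot_congr _ Q.isBallot_rowOf
      fun v hv => TrSSYT.missingRow_ofBallot Q.isBallot_rowOf hv, RotSYT.ofBallot_rowOf]

/-- There is a bijection φ from TrSSYT(g,r) to 180°-rotated SYT of size g and
height ≤ r+1 such that for every R, the shapes of R and φ(R) are complementary
in the (r+1)×g rectangle. -/
theorem stmt_3 (g r : ℕ) :
    ∃ φ : TrSSYT g r r ≃ RotSYT g r,
      ∀ (R : TrSSYT g r r) (i : Fin (r + 1)) (j : Fin g),
        (R.entry i (j : ℕ)).isSome ↔ ¬ ((φ R).entry i j).isSome := by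
  refine ⟨TrSSYT.equivRotSYT g r, fun R i j => ?_⟩
  change (R.entry i j).isSome ↔ ¬ (sortedRow (fiber g R.missingRow i) j.rev).isSome
  rw [R.entry_eq_sortedRow, isSome_sortedRow_iff, isSome_sortedRow_iff, Fin.val_rev]
  have := card_fiber_add_card_cofiber (g := g) R.missingRow i
  omega
end

section
/- The set TrSSYT(g,r) of transposed SSYT of content (r^g) and height at most r+1 is in bijection with the set of standard Young tableaux of size g with at most r+1 rows. -/
/-- A standard Young tableau of size g with at most r+1 rows: left-and-bottom
justified shape, each of 1,…,g used exactly once, rows and columns strictly increasing. -/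
structure SYTB (g r : ℕ) where
  entry : Fin (r+1) → ℕ → Option ℕ
  left : ∀ (row : Fin (r+1)) (j j' : ℕ), (entry row j).isSome → j' ≤ j → (entry row j').isSome
  down : ∀ (row row' : Fin (r+1)) (j : ℕ), (entry row j).isSome → row' ≤ row → (entry row' j).isSome
  vals : ∀ (row : Fin (r+1)) (j : ℕ) (v : ℕ), entry row j = some v → 1 ≤ v ∧ v ≤ g
  content : ∀ v : ℕ, 1 ≤ v → v ≤ g → ∃! p : Fin (r+1) × ℕ, entry p.1 p.2 = some v
  row_strict : ∀ (row : Fin (r+1)) (j j' : ℕ) (a b : ℕ),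
    entry row j = some a → entry row j' = some b → j < j' → a < b
  col_strict : ∀ (row row' : Fin (r+1)) (j : ℕ) (a b : ℕ),
    entry row j = some a → entry row' j = some b → row < row' → a < b

/-!
Since rows strictly increase, each of `1, …, g` occurs at most once in each of the `r + 1` rows
of a transposed SSYT of content `(r^g)`, hence it is missing from exactly one row. Replacing every
row by its complement in `{1, …, g}` and reversing the order of the rows therefore produces row
sets in which every value occurs exactly once. A tableau with increasing rows is determined by its
row sets, and for two rows `A` (lower) and `B` (upper) the shape and weak column conditions together
say exactly that `#{x ∈ B | x ≤ v} ≤ #{x ∈ A | x ≤ v}` for all `v`; complementation reverses this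
relation, in step with the reversal of the rows. Columns of the resulting tableau are strictly
increasing because its rows are disjoint.
-/

open Finset

structure IsIncreasingRow (E : ℕ → Option ℕ) : Prop where
  left : ∀ j j', (E j).isSome → j' ≤ j → (E j').isSome
  strict : ∀ j j' a b, E j = some a → E j' = some b → j < j' → a < b

namespace IsIncreasingRow

variable {E : ℕ → Option ℕ} (hE : IsIncreasingRow E)
include hE

lemma lt_iff_lt {i j a b : ℕ} (ha : E i = some a) (hb : E j = some b) : i < j ↔ a < b := by
  refine ⟨hE.strict i j a b ha hb, fun hab => ?_⟩
  by_contra! hji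
  rcases hji.eq_or_lt with rfl | hji
  · cases ha.symm.trans hb
    exact lt_irrefl a hab
  · exact (hE.strict j i b a hb ha hji).not_gt hab

lemma eq_of_eq_some {i j a : ℕ} (hi : E i = some a) (hj : E j = some a) : i = j :=
  le_antisymm (not_lt.1 fun h => ((hE.lt_iff_lt hj hi).1 h).false)
    (not_lt.1 fun h => ((hE.lt_iff_lt hi hj).1 h).false)

variable {S : Finset ℕ} (hS : ∀ v, v ∈ S ↔ ∃ j, E j = some v)
include hS

lemma card_filter_lt {j v : ℕ} (h : E j = some v) : #{x ∈ S | x < v} = j := by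
  have hdef : ∀ i < j, ∃ u, E i = some u := fun i hi =>
    Option.isSome_iff_exists.1 (hE.left j i (by simp [h]) hi.le)
  choose! f hf using hdef
  have himage : {x ∈ S | x < v} = (range j).image f := by
    ext x
    simp only [mem_filter, mem_image, mem_range, hS]
    constructor
    · rintro ⟨⟨i, hi⟩, hxv⟩
      have hij : i < j := (hE.lt_iff_lt hi h).2 hxv
      exact ⟨i, hij, Option.some_injective _ ((hf i hij).symm.trans hi)⟩
    · rintro ⟨i, hij, rfl⟩
      exact ⟨⟨i, hf i hij⟩, (hE.lt_iff_lt (hf i hij) h).1 hij⟩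
  rw [himage, card_image_of_injOn, card_range]
  intro a ha b hb hab
  exact hE.eq_of_eq_some (hf a (mem_range.1 ha)) (hab ▸ hf b (mem_range.1 hb))

lemma eq_some_iff {j v : ℕ} : E j = some v ↔ v ∈ S ∧ #{x ∈ S | x < v} = j := by
  refine ⟨fun h => ⟨(hS v).2 ⟨j, h⟩, hE.card_filter_lt hS h⟩, fun ⟨hv, hcard⟩ => ?_⟩
  obtain ⟨i, hi⟩ := (hS v).1 hv
  rwa [← hcard, hE.card_filter_lt hS hi]

lemma ext {E' : ℕ → Option ℕ} (hE' : IsIncreasingRow E') (hS' : ∀ v, v ∈ S ↔ ∃ j, E' j = some v) :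
    E = E' :=
  funext fun _ => Option.ext fun _ => by rw [hE.eq_some_iff hS, hE'.eq_some_iff hS']

end IsIncreasingRow

def rowOfFinset (S : Finset ℕ) (j : ℕ) : Option ℕ := (S.sort (· ≤ ·))[j]?

section RowOfFinset

variable {S : Finset ℕ} {j v : ℕ}

lemma isSome_rowOfFinset_iff : (rowOfFinset S j).isSome ↔ j < #S := by
  simp [rowOfFinset]

lemma isIncreasingRow_rowOfFinset (S : Finset ℕ) : IsIncreasingRow (rowOfFinset S) where
  left j j' hj hle := isSome_rowOfFinset_iff.2 (hle.trans_lt (isSome_rowOfFinset_iff.1 hj))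
  strict j j' a b ha hb hlt := by
    rw [rowOfFinset, List.getElem?_eq_some_iff] at ha hb
    obtain ⟨_, rfl⟩ := ha
    obtain ⟨_, rfl⟩ := hb
    exact (sortedLT_sort S).pairwise.rel_get_of_lt (by exact hlt)

lemma mem_iff_exists_rowOfFinset_eq_some : v ∈ S ↔ ∃ j, rowOfFinset S j = some v := by
  rw [← mem_sort (· ≤ ·), List.mem_iff_getElem?]
  rfl

lemma rowOfFinset_eq_some_iff : rowOfFinset S j = some v ↔ v ∈ S ∧ #{x ∈ S | x < v} = j :=
  (isIncreasingRow_rowOfFinset S).eq_some_iff fun _ => mem_iff_exists_rowOfFinset_eq_some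

end RowOfFinset

section RowSet

open Classical

noncomputable def rowSet (g : ℕ) (E : ℕ → Option ℕ) : Finset ℕ := {v ∈ Icc 1 g | ∃ j, E j = some v}

variable {g : ℕ} {E : ℕ → Option ℕ}

lemma rowSet_subset : rowSet g E ⊆ Icc 1 g := filter_subset _ _

lemma mem_rowSet (hvals : ∀ j v, E j = some v → 1 ≤ v ∧ v ≤ g) {v : ℕ} :
    v ∈ rowSet g E ↔ ∃ j, E j = some v := by
  rw [rowSet, mem_filter, mem_Icc, and_iff_right_iff_imp]
  exact fun ⟨j, hj⟩ => hvals j v hj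

lemma IsIncreasingRow.eq_rowOfFinset_rowSet (hE : IsIncreasingRow E)
    (hvals : ∀ j v, E j = some v → 1 ≤ v ∧ v ≤ g) : E = rowOfFinset (rowSet g E) :=
  hE.ext (fun _ => mem_rowSet hvals) (isIncreasingRow_rowOfFinset _)
    fun _ => mem_iff_exists_rowOfFinset_eq_some

lemma rowSet_rowOfFinset {S : Finset ℕ} (hS : S ⊆ Icc 1 g) : rowSet g (rowOfFinset S) = S := by
  ext v
  rw [mem_rowSet, mem_iff_exists_rowOfFinset_eq_some]
  exact fun _ v h => mem_Icc.1 (hS (rowOfFinset_eq_some_iff.1 h).1)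

end RowSet

def Dominates (A B : Finset ℕ) : Prop := ∀ v, #{x ∈ B | x ≤ v} ≤ #{x ∈ A | x ≤ v}

section Dominates

variable {A B : Finset ℕ}

lemma lt_card_filter_le_iff {j a : ℕ} (h : rowOfFinset A j = some a) (w : ℕ) :
    j < #{x ∈ A | x ≤ w} ↔ a ≤ w := by
  obtain ⟨haA, hcard⟩ := rowOfFinset_eq_some_iff.1 h
  constructor
  · intro hj
    by_contra! hwa
    have hsub : {x ∈ A | x ≤ w} ⊆ {x ∈ A | x < a} :=
      monotone_filter_right A fun _ _ hx => hx.trans_lt hwa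
    exact (hcard ▸ card_le_card hsub).not_gt hj
  · intro haw
    have hsub : {x ∈ A | x < a} ⊂ {x ∈ A | x ≤ w} :=
      (ssubset_iff_of_subset (monotone_filter_right A fun _ _ hx => hx.le.trans haw)).2
        ⟨a, mem_filter.2 ⟨haA, haw⟩, by simp⟩
    exact hcard ▸ card_lt_card hsub

lemma dominates_iff : Dominates A B ↔
    #B ≤ #A ∧ ∀ j a b, rowOfFinset A j = some a → rowOfFinset B j = some b → a ≤ b := by
  constructor
  · intro h
    refine ⟨?_, fun j a b ha hb => ?_⟩
    · have hB : {x ∈ B | x ≤ B.sup id} = B := filter_true_of_mem fun x hx => le_sup (f := id) hx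
      exact hB ▸ (h _).trans (card_filter_le _ _)
    · exact (lt_card_filter_le_iff ha b).1
        (((lt_card_filter_le_iff hb b).2 le_rfl).trans_le (h b))
  · rintro ⟨hcard, hcol⟩ v
    by_contra! hlt
    set j := #{x ∈ A | x ≤ v}
    have hjB : j < #B := hlt.trans_le (card_filter_le _ _)
    obtain ⟨a, ha⟩ := Option.isSome_iff_exists.1 (isSome_rowOfFinset_iff.2 (hjB.trans_le hcard))
    obtain ⟨b, hb⟩ := Option.isSome_iff_exists.1 (isSome_rowOfFinset_iff.2 hjB)
    have hbv : b ≤ v := (lt_card_filter_le_iff hb v).1 hlt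
    exact lt_irrefl j ((lt_card_filter_le_iff ha v).2 ((hcol j a b ha hb).trans hbv))

lemma Dominates.sdiff {I : Finset ℕ} (hA : A ⊆ I) (hB : B ⊆ I) (h : Dominates A B) :
    Dominates (I \ B) (I \ A) := by
  intro v
  have hfilter : ∀ C ⊆ I, {x ∈ I \ C | x ≤ v} = {x ∈ I | x ≤ v} \ {x ∈ C | x ≤ v} := by
    intro C _
    ext x
    simp only [mem_filter, mem_sdiff]
    tauto
  rw [hfilter A hA, hfilter B hB, card_sdiff_of_subset (filter_subset_filter _ hA),
    card_sdiff_of_subset (filter_subset_filter _ hB)]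
  have := card_le_card (filter_subset_filter (· ≤ v) hB)
  have := h v
  omega

lemma dominates_rowSet {g : ℕ} {E E' : ℕ → Option ℕ} (hE : IsIncreasingRow E)
    (hE' : IsIncreasingRow E') (hvals : ∀ j v, E j = some v → 1 ≤ v ∧ v ≤ g)
    (hvals' : ∀ j v, E' j = some v → 1 ≤ v ∧ v ≤ g)
    (hshape : ∀ j, (E' j).isSome → (E j).isSome)
    (hcol : ∀ j a b, E j = some a → E' j = some b → a ≤ b) :
    Dominates (rowSet g E) (rowSet g E') := by
  rw [hE.eq_rowOfFinset_rowSet hvals, hE'.eq_rowOfFinset_rowSet hvals'] at hshape hcol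
  refine dominates_iff.2 ⟨le_of_forall_lt fun j hj => ?_, hcol⟩
  rw [← isSome_rowOfFinset_iff] at hj ⊢
  exact hshape j hj

end Dominates

lemma ncard_setOf_eq_some_eq_ncard_setOf_mem {ι : Type*} {E : ι → ℕ → Option ℕ}
    {S : ι → Finset ℕ} (hE : ∀ k, IsIncreasingRow (E k))
    (hS : ∀ k v, v ∈ S k ↔ ∃ j, E k j = some v) (v : ℕ) :
    {p : ι × ℕ | E p.1 p.2 = some v}.ncard = {k | v ∈ S k}.ncard := by
  have hinj : Set.InjOn Prod.fst {p : ι × ℕ | E p.1 p.2 = some v} := fun p hp q hq hpq =>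
    Prod.ext hpq ((hE p.1).eq_of_eq_some hp (hpq ▸ hq))
  rw [← hinj.ncard_image]
  congr 1
  ext k
  simp [hS]

lemma ncard_setOf_eq_one_iff {α : Type*} {P : α → Prop} : {p | P p}.ncard = 1 ↔ ∃! p, P p := by
  simp [Set.ncard_eq_one, Set.eq_singleton_iff_unique_mem, ExistsUnique]

def complRows (g : ℕ) {r : ℕ} (A : Fin (r + 1) → Finset ℕ) (k : Fin (r + 1)) : Finset ℕ :=
  Icc 1 g \ A k.rev

lemma complRows_complRows {g r : ℕ} {A : Fin (r + 1) → Finset ℕ} (hA : ∀ k, A k ⊆ Icc 1 g) :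
    complRows g (complRows g A) = A :=
  funext fun k => by simp only [complRows, Fin.rev_rev, Finset.sdiff_sdiff_eq_self (hA k)]

/-- The row sets, bottom row first, of a tableau with increasing rows and weakly increasing
columns. -/
structure IsRowSets (g m : ℕ) {r : ℕ} (A : Fin (r + 1) → Finset ℕ) : Prop where
  subset : ∀ k, A k ⊆ Icc 1 g
  dominates : ∀ k k', k < k' → Dominates (A k) (A k')
  ncard_mem : ∀ v, 1 ≤ v → v ≤ g → {k | v ∈ A k}.ncard = m

namespace IsRowSets

variable {g m r : ℕ} {A : Fin (r + 1) → Finset ℕ} (hA : IsRowSets g m A)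
include hA

lemma isSome_of_le {k k' : Fin (r + 1)} {j : ℕ} (hj : (rowOfFinset (A k) j).isSome) (hk : k' ≤ k) :
    (rowOfFinset (A k') j).isSome := by
  rcases hk.eq_or_lt with rfl | hk
  · exact hj
  rw [isSome_rowOfFinset_iff] at hj ⊢
  exact hj.trans_le (dominates_iff.1 (hA.dominates _ _ hk)).1

lemma vals (k : Fin (r + 1)) (j v : ℕ) (h : rowOfFinset (A k) j = some v) : 1 ≤ v ∧ v ≤ g :=
  mem_Icc.1 (hA.subset k (rowOfFinset_eq_some_iff.1 h).1)

lemma col_le {k k' : Fin (r + 1)} {j a b : ℕ} (ha : rowOfFinset (A k) j = some a)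
    (hb : rowOfFinset (A k') j = some b) (hk : k < k') : a ≤ b :=
  (dominates_iff.1 (hA.dominates _ _ hk)).2 j a b ha hb

lemma ncard_setOf_rowOfFinset_eq_some {v : ℕ} (h1 : 1 ≤ v) (h2 : v ≤ g) :
    {p : Fin (r + 1) × ℕ | rowOfFinset (A p.1) p.2 = some v}.ncard = m :=
  (ncard_setOf_eq_some_eq_ncard_setOf_mem (fun _ => isIncreasingRow_rowOfFinset _)
    (fun _ _ => mem_iff_exists_rowOfFinset_eq_some) v).trans (hA.ncard_mem v h1 h2)

lemma compl {m' : ℕ} (hm : m + m' = r + 1) : IsRowSets g m' (complRows g A) where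
  subset _ := sdiff_subset
  dominates k k' hk :=
    (hA.dominates _ _ (Fin.rev_lt_rev.2 hk)).sdiff (hA.subset _) (hA.subset _)
  ncard_mem v h1 h2 := by
    have hset : {k | v ∈ complRows g A k} = Fin.rev ⁻¹' {k | v ∈ A k}ᶜ := by
      ext k
      simp [complRows, h1, h2]
    rw [hset, Set.ncard_preimage_of_injective_subset_range Fin.rev_injective (by simp),
      Set.ncard_compl, hA.ncard_mem v h1 h2, Nat.card_eq_fintype_card, Fintype.card_fin]
    omega

omit hA in
lemma eq_of_mem (hA : IsRowSets g 1 A) {v : ℕ} {k k' : Fin (r + 1)} (hk : v ∈ A k)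
    (hk' : v ∈ A k') : k = k' := by
  obtain ⟨h1, h2⟩ := mem_Icc.1 (hA.subset k hk)
  obtain ⟨k₀, hk₀⟩ := Set.ncard_eq_one.1 (hA.ncard_mem v h1 h2)
  have hk : k ∈ ({k₀} : Set _) := hk₀ ▸ hk
  have hk' : k' ∈ ({k₀} : Set _) := hk₀ ▸ hk'
  exact hk.trans hk'.symm

end IsRowSets

def IsRowSets.complEquiv {g m m' r : ℕ} (hm : m + m' = r + 1) :
    {A : Fin (r + 1) → Finset ℕ // IsRowSets g m A} ≃
      {A : Fin (r + 1) → Finset ℕ // IsRowSets g m' A} where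
  toFun A := ⟨complRows g A, A.2.compl hm⟩
  invFun A := ⟨complRows g A, A.2.compl (by omega)⟩
  left_inv A := Subtype.ext (complRows_complRows A.2.subset)
  right_inv A := Subtype.ext (complRows_complRows A.2.subset)

attribute [ext] TrSSYT SYTB

namespace TrSSYT

variable {g r : ℕ}

lemma isIncreasingRow (T : TrSSYT g r r) (k : Fin (r + 1)) : IsIncreasingRow (T.entry k) :=
  ⟨T.left k, T.row_strict k⟩

lemma isRowSets (T : TrSSYT g r r) : IsRowSets g r fun k => rowSet g (T.entry k) where
  subset _ := rowSet_subset
  dominates k k' hk := dominates_rowSet (T.isIncreasingRow k) (T.isIncreasingRow k')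
    (T.vals k) (T.vals k') (fun j hj => T.down k' k j hj hk.le)
    (fun j a b ha hb => T.col_weak k k' j a b ha hb hk)
  ncard_mem v h1 h2 := by
    rw [← ncard_setOf_eq_some_eq_ncard_setOf_mem T.isIncreasingRow
      (fun k _ => mem_rowSet (T.vals k))]
    exact T.content v h1 h2

def ofRowSets (A : Fin (r + 1) → Finset ℕ) (hA : IsRowSets g r A) : TrSSYT g r r where
  entry k := rowOfFinset (A k)
  left _ := (isIncreasingRow_rowOfFinset _).left
  down _ _ _ hj hk := hA.isSome_of_le hj hk
  vals := hA.vals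
  content _ := hA.ncard_setOf_rowOfFinset_eq_some
  row_strict _ := (isIncreasingRow_rowOfFinset _).strict
  col_weak _ _ _ _ _ ha hb hk := hA.col_le ha hb hk

noncomputable def equivRowSets :
    TrSSYT g r r ≃ {A : Fin (r + 1) → Finset ℕ // IsRowSets g r A} where
  toFun T := ⟨_, T.isRowSets⟩
  invFun A := ofRowSets A.1 A.2
  left_inv T := TrSSYT.ext <| funext fun k =>
    ((T.isIncreasingRow k).eq_rowOfFinset_rowSet (T.vals k)).symm
  right_inv A := Subtype.ext (funext fun k => rowSet_rowOfFinset (A.2.subset k))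

end TrSSYT

namespace SYTB

variable {g r : ℕ}

lemma isIncreasingRow (Y : SYTB g r) (k : Fin (r + 1)) : IsIncreasingRow (Y.entry k) :=
  ⟨Y.left k, Y.row_strict k⟩

lemma isRowSets (Y : SYTB g r) : IsRowSets g 1 fun k => rowSet g (Y.entry k) where
  subset _ := rowSet_subset
  dominates k k' hk := dominates_rowSet (Y.isIncreasingRow k) (Y.isIncreasingRow k')
    (Y.vals k) (Y.vals k') (fun j hj => Y.down k' k j hj hk.le)
    (fun j a b ha hb => (Y.col_strict k k' j a b ha hb hk).le)
  ncard_mem v h1 h2 := by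
    rw [← ncard_setOf_eq_some_eq_ncard_setOf_mem Y.isIncreasingRow
      (fun k _ => mem_rowSet (Y.vals k)), ncard_setOf_eq_one_iff]
    exact Y.content v h1 h2

def ofRowSets (A : Fin (r + 1) → Finset ℕ) (hA : IsRowSets g 1 A) : SYTB g r where
  entry k := rowOfFinset (A k)
  left _ := (isIncreasingRow_rowOfFinset _).left
  down _ _ _ hj hk := hA.isSome_of_le hj hk
  vals := hA.vals
  content _ h1 h2 := ncard_setOf_eq_one_iff.1 (hA.ncard_setOf_rowOfFinset_eq_some h1 h2)
  row_strict _ := (isIncreasingRow_rowOfFinset _).strict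
  col_strict k k' _ a b ha hb hk := by
    refine (hA.col_le ha hb hk).lt_of_ne ?_
    rintro rfl
    exact hk.ne (hA.eq_of_mem (rowOfFinset_eq_some_iff.1 ha).1 (rowOfFinset_eq_some_iff.1 hb).1)

noncomputable def equivRowSets : SYTB g r ≃ {A : Fin (r + 1) → Finset ℕ // IsRowSets g 1 A} where
  toFun Y := ⟨_, Y.isRowSets⟩
  invFun A := ofRowSets A.1 A.2
  left_inv Y := SYTB.ext <| funext fun k =>
    ((Y.isIncreasingRow k).eq_rowOfFinset_rowSet (Y.vals k)).symm
  right_inv A := Subtype.ext (funext fun k => rowSet_rowOfFinset (A.2.subset k))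

end SYTB

/-- TrSSYT(g,r) is in bijection with the standard Young tableaux of size g
with at most r+1 rows. -/
theorem stmt_4 (g r : ℕ) : Nonempty (TrSSYT g r r ≃ SYTB g r) :=
  ⟨TrSSYT.equivRowSets.trans ((IsRowSets.complEquiv rfl).trans SYTB.equivRowSets.symm)⟩
end

section
/- For each i with 1 ≤ i ≤ r, there is a bijection φ_i from TrSSYT(g,r,i) to TrSSYT(g,r,r+1−i), and for every R in TrSSYT(g,r,i), the shapes of R and φ_i(R) are complementary in an (r+1)×g rectangle. -/
namespace Stmt5


lemma fsub {S : Finset ℕ} {p q : ℕ → Prop} [DecidablePred p] [DecidablePred q]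
    (h : ∀ x, p x → q x) : S.filter p ⊆ S.filter q := by
  intro x hx
  rw [Finset.mem_filter] at hx ⊢
  exact ⟨hx.1, h x hx.2⟩

/-- the `j`-th smallest element of a finite set of naturals (0-indexed), if it exists -/
noncomputable def kth (S : Finset ℕ) (j : ℕ) : Option ℕ :=
  if h : ∃ v, v ∈ S ∧ (S.filter (· < v)).card = j then some h.choose else none

lemma kth_unique {S : Finset ℕ} {j v w : ℕ} (hv : v ∈ S ∧ (S.filter (· < v)).card = j)
    (hw : w ∈ S ∧ (S.filter (· < w)).card = j) : v = w := by
  rcases lt_trichotomy v w with h | h | h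
  · exfalso
    have hss : S.filter (· < v) ⊂ S.filter (· < w) := by
      refine Finset.ssubset_iff_of_subset (fsub (fun x hx => lt_trans hx h)) |>.mpr
        ⟨v, Finset.mem_filter.mpr ⟨hv.1, h⟩, by simp⟩
    have := Finset.card_lt_card hss
    omega
  · exact h
  · exfalso
    have hss : S.filter (· < w) ⊂ S.filter (· < v) := by
      refine Finset.ssubset_iff_of_subset (fsub (fun x hx => lt_trans hx h)) |>.mpr
        ⟨w, Finset.mem_filter.mpr ⟨hw.1, h⟩, by simp⟩
    have := Finset.card_lt_card hss
    omega

lemma kth_eq_some {S : Finset ℕ} {j v : ℕ} :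
    kth S j = some v ↔ v ∈ S ∧ (S.filter (· < v)).card = j := by
  constructor
  · intro h
    unfold kth at h
    split_ifs at h with hex
    · have := hex.choose_spec
      simpa [← Option.some_inj.mp h] using this
  · intro h
    have hex : ∃ v, v ∈ S ∧ (S.filter (· < v)).card = j := ⟨v, h⟩
    unfold kth
    rw [dif_pos hex]
    exact congrArg some (kth_unique hex.choose_spec h)

lemma exists_kth {S : Finset ℕ} {j : ℕ} (h : j < S.card) :
    ∃ v, v ∈ S ∧ (S.filter (· < v)).card = j := by
  have hne : S.Nonempty := Finset.card_pos.mp (by omega)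
  set T := S.filter (fun w => j ≤ (S.filter (· < w)).card) with hT
  have hmax : S.max' hne ∈ T := by
    have hfe : S.filter (· < S.max' hne) = S.erase (S.max' hne) := by
      ext u
      simp only [Finset.mem_filter, Finset.mem_erase]
      constructor
      · rintro ⟨hu, hlt⟩; exact ⟨ne_of_lt hlt, hu⟩
      · rintro ⟨hne', hu⟩
        exact ⟨hu, lt_of_le_of_ne (S.le_max' u hu) hne'⟩
    rw [hT, Finset.mem_filter, hfe, Finset.card_erase_of_mem (S.max'_mem hne)]
    exact ⟨S.max'_mem hne, by omega⟩
  have hTne : T.Nonempty := ⟨_, hmax⟩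
  set v := T.min' hTne with hv
  have hvT : v ∈ T := T.min'_mem hTne
  rw [hT, Finset.mem_filter] at hvT
  refine ⟨v, hvT.1, ?_⟩
  by_contra hne'
  have hgt : j < (S.filter (· < v)).card := lt_of_le_of_ne hvT.2 (Ne.symm hne')
  have hfne : (S.filter (· < v)).Nonempty := Finset.card_pos.mp (by omega)
  set w := (S.filter (· < v)).max' hfne with hw
  have hwmem : w ∈ S.filter (· < v) := (S.filter (· < v)).max'_mem hfne
  rw [Finset.mem_filter] at hwmem
  have hsub : (S.filter (· < v)).erase w ⊆ S.filter (· < w) := by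
    intro u hu
    rw [Finset.mem_erase, Finset.mem_filter] at hu
    exact Finset.mem_filter.mpr ⟨hu.2.1,
      lt_of_le_of_ne ((S.filter (· < v)).le_max' u (Finset.mem_filter.mpr hu.2)) hu.1⟩
  have hcard : j ≤ (S.filter (· < w)).card := by
    have := Finset.card_le_card hsub
    rw [Finset.card_erase_of_mem (Finset.mem_filter.mpr hwmem)] at this
    omega
  have hwT : w ∈ T := Finset.mem_filter.mpr ⟨hwmem.1, hcard⟩
  have := T.min'_le w hwT
  omega

lemma kth_isSome {S : Finset ℕ} {j : ℕ} : (kth S j).isSome ↔ j < S.card := by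
  constructor
  · intro h
    obtain ⟨v, hv⟩ := Option.isSome_iff_exists.mp h
    obtain ⟨hvS, hvc⟩ := kth_eq_some.mp hv
    have hsub : insert v (S.filter (· < v)) ⊆ S := by
      intro u hu
      rcases Finset.mem_insert.mp hu with h | h
      · exact h ▸ hvS
      · exact Finset.mem_filter.mp h |>.1
    have := Finset.card_le_card hsub
    rw [Finset.card_insert_of_notMem (by simp)] at this
    omega
  · intro h
    obtain ⟨v, hv⟩ := exists_kth h
    rw [show kth S j = some v from kth_eq_some.mpr hv]
    rfl

lemma kth_strict {S : Finset ℕ} {j j' a b : ℕ} (ha : kth S j = some a) (hb : kth S j' = some b)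
    (h : j < j') : a < b := by
  obtain ⟨haS, hac⟩ := kth_eq_some.mp ha
  obtain ⟨hbS, hbc⟩ := kth_eq_some.mp hb
  by_contra hle
  push_neg at hle
  have : S.filter (· < b) ⊆ S.filter (· < a) :=
    fsub (fun x hx => lt_of_lt_of_le hx hle)
  have := Finset.card_le_card this
  omega

/-- pointwise dominance of counting functions -/
def DomLE (S S' : Finset ℕ) : Prop := ∀ x, (S.filter (· ≤ x)).card ≤ (S'.filter (· ≤ x)).card

lemma dom_of_kth {S S' : Finset ℕ} (hcard : S.card ≤ S'.card)
    (h : ∀ j v v', kth S j = some v → kth S' j = some v' → v' ≤ v) : DomLE S S' := by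
  intro x
  set t := (S.filter (· ≤ x)).card with ht
  rcases Nat.eq_zero_or_pos t with h0 | hpos
  · omega
  have hfne : (S.filter (· ≤ x)).Nonempty := Finset.card_pos.mp hpos
  set v := (S.filter (· ≤ x)).max' hfne with hv
  have hvmem := Finset.mem_filter.mp ((S.filter (· ≤ x)).max'_mem hfne)
  have hfeq : S.filter (· < v) = (S.filter (· ≤ x)).erase v := by
    ext u
    simp only [Finset.mem_filter, Finset.mem_erase]
    constructor
    · rintro ⟨hu, hlt⟩; exact ⟨ne_of_lt hlt, hu, le_trans (le_of_lt hlt) hvmem.2⟩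
    · rintro ⟨hne', hu, hux⟩
      exact ⟨hu, lt_of_le_of_ne ((S.filter (· ≤ x)).le_max' u (Finset.mem_filter.mpr ⟨hu, hux⟩)) hne'⟩
  have hvk : kth S (t - 1) = some v := by
    rw [kth_eq_some, hfeq, Finset.card_erase_of_mem (Finset.mem_filter.mpr hvmem)]
    exact ⟨hvmem.1, rfl⟩
  have hcS : t ≤ S.card := Finset.card_le_card (Finset.filter_subset _ _)
  have hS' : t - 1 < S'.card := by omega
  obtain ⟨v', hv'⟩ := Option.isSome_iff_exists.mp (kth_isSome.mpr hS')
  have hle := h _ _ _ hvk hv'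
  obtain ⟨hv'S, hv'c⟩ := kth_eq_some.mp hv'
  have hsub : insert v' (S'.filter (· < v')) ⊆ S'.filter (· ≤ x) := by
    intro u hu
    rcases Finset.mem_insert.mp hu with rfl | h'
    · exact Finset.mem_filter.mpr ⟨hv'S, le_trans hle hvmem.2⟩
    · obtain ⟨huS, hult⟩ := Finset.mem_filter.mp h'
      exact Finset.mem_filter.mpr ⟨huS, le_trans (le_of_lt hult) (le_trans hle hvmem.2)⟩
  have := Finset.card_le_card hsub
  rw [Finset.card_insert_of_notMem (by simp)] at this
  omega

lemma kth_of_dom {S S' : Finset ℕ} (h : DomLE S S') {j v v' : ℕ}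
    (hv : kth S j = some v) (hv' : kth S' j = some v') : v' ≤ v := by
  obtain ⟨hvS, hvc⟩ := kth_eq_some.mp hv
  obtain ⟨hv'S, hv'c⟩ := kth_eq_some.mp hv'
  by_contra hlt
  push_neg at hlt
  have h1 : insert v (S.filter (· < v)) ⊆ S.filter (· ≤ v) := by
    intro u hu
    rcases Finset.mem_insert.mp hu with rfl | h'
    · exact Finset.mem_filter.mpr ⟨hvS, le_refl u⟩
    · obtain ⟨huS, hult⟩ := Finset.mem_filter.mp h'
      exact Finset.mem_filter.mpr ⟨huS, le_of_lt hult⟩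
  have hc1 := Finset.card_le_card h1
  rw [Finset.card_insert_of_notMem (by simp)] at hc1
  have h2 : S'.filter (· ≤ v) ⊆ S'.filter (· < v') :=
    fsub (fun x hx => lt_of_le_of_lt hx hlt)
  have hc2 := Finset.card_le_card h2
  have := h v
  omega

lemma dom_compl {g : ℕ} {S S' : Finset ℕ} (hS : S ⊆ Finset.Icc 1 g) (hS' : S' ⊆ Finset.Icc 1 g)
    (h : DomLE S S') : DomLE (Finset.Icc 1 g \ S') (Finset.Icc 1 g \ S) := by
  intro x
  have key : ∀ (T : Finset ℕ), T ⊆ Finset.Icc 1 g →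
      ((Finset.Icc 1 g \ T).filter (· ≤ x)).card
        = ((Finset.Icc 1 g).filter (· ≤ x)).card - (T.filter (· ≤ x)).card := by
    intro T hT
    have heq : (Finset.Icc 1 g \ T).filter (· ≤ x)
        = (Finset.Icc 1 g).filter (· ≤ x) \ T.filter (· ≤ x) := by
      ext u
      simp only [Finset.mem_filter, Finset.mem_sdiff]
      tauto
    rw [heq, Finset.card_sdiff_of_subset (Finset.filter_subset_filter _ hT)]
  rw [key S hS, key S' hS']
  have h1 : (S.filter (· ≤ x)).card ≤ ((Finset.Icc 1 g).filter (· ≤ x)).card :=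
    Finset.card_le_card (Finset.filter_subset_filter _ hS)
  have := h x
  omega

variable {g r i : ℕ}

lemma val_ge (R : TrSSYT g r i) {row : Fin (r+1)} {j v : ℕ} (h : R.entry row j = some v) :
    j + 1 ≤ v := by
  induction j generalizing v with
  | zero => exact (R.vals row 0 v h).1
  | succ j ih =>
    have hs : (R.entry row j).isSome := R.left row (j+1) j (by rw [h]; rfl) (by omega)
    obtain ⟨w, hw⟩ := Option.isSome_iff_exists.mp hs
    have h1 := ih hw
    have h2 := R.row_strict row j (j+1) w v hw h (by omega)
    omega

lemma col_lt_g (R : TrSSYT g r i) {row : Fin (r+1)} {j v : ℕ} (h : R.entry row j = some v) :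
    j < g := by
  have h1 := val_ge R h
  have h2 := (R.vals row j v h).2
  omega

/-- the set of values appearing in a row -/
def rowA (g : ℕ) {r : ℕ} (f : Fin (r+1) → ℕ → Option ℕ) (row : Fin (r+1)) : Finset ℕ :=
  (Finset.Icc 1 g).filter (fun v => ∃ j ∈ Finset.range g, f row j = some v)

lemma rowA_subset {f : Fin (r+1) → ℕ → Option ℕ} {row : Fin (r+1)} :
    rowA g f row ⊆ Finset.Icc 1 g := Finset.filter_subset _ _

lemma mem_rowA (R : TrSSYT g r i) {row : Fin (r+1)} {v : ℕ} :
    v ∈ rowA g R.entry row ↔ ∃ j, R.entry row j = some v := by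
  unfold rowA
  simp only [Finset.mem_filter, Finset.mem_Icc, Finset.mem_range]
  constructor
  · rintro ⟨-, j, -, hj⟩; exact ⟨j, hj⟩
  · rintro ⟨j, hj⟩
    exact ⟨⟨(R.vals row j v hj).1, (R.vals row j v hj).2⟩, j, col_lt_g R hj, hj⟩

lemma entry_eq_kth (R : TrSSYT g r i) (row : Fin (r+1)) (j : ℕ) :
    R.entry row j = kth (rowA g R.entry row) j := by
  cases h : R.entry row j with
  | some v =>
    symm
    rw [kth_eq_some]
    refine ⟨(mem_rowA R).mpr ⟨j, h⟩, ?_⟩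
    have himg : (rowA g R.entry row).filter (· < v)
        = (Finset.range j).image (fun k => (R.entry row k).getD 0) := by
      ext w
      simp only [Finset.mem_filter, Finset.mem_image, Finset.mem_range]
      constructor
      · rintro ⟨hw, hlt⟩
        obtain ⟨k, hk⟩ := (mem_rowA R).mp hw
        have hkj : k < j := by
          rcases lt_trichotomy k j with h' | h' | h'
          · exact h'
          · exfalso; rw [h', h] at hk
            exact absurd (Option.some_inj.mp hk) (by omega)
          · exact absurd (R.row_strict row j k v w h hk h') (by omega)
        exact ⟨k, hkj, by rw [hk]; rfl⟩
      · rintro ⟨k, hkj, hk⟩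
        have hs : (R.entry row k).isSome := R.left row j k (by rw [h]; rfl) (le_of_lt hkj)
        obtain ⟨w', hw'⟩ := Option.isSome_iff_exists.mp hs
        rw [hw'] at hk
        simp only [Option.getD_some] at hk
        subst hk
        exact ⟨(mem_rowA R).mpr ⟨k, hw'⟩, R.row_strict row k j w' v hw' h hkj⟩
    rw [himg, Finset.card_image_of_injOn, Finset.card_range]
    intro k hk k' hk' heq
    simp only [Finset.coe_range, Set.mem_Iio] at hk hk'
    have hsk : (R.entry row k).isSome := R.left row j k (by rw [h]; rfl) (le_of_lt hk)
    have hsk' : (R.entry row k').isSome := R.left row j k' (by rw [h]; rfl) (le_of_lt hk')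
    obtain ⟨w, hw⟩ := Option.isSome_iff_exists.mp hsk
    obtain ⟨w', hw'⟩ := Option.isSome_iff_exists.mp hsk'
    simp only [hw, hw', Option.getD_some] at heq
    subst heq
    rcases lt_trichotomy k k' with h' | h' | h'
    · exact absurd (R.row_strict row k k' w w hw hw' h') (by omega)
    · exact h'
    · exact absurd (R.row_strict row k' k w w hw' hw h') (by omega)
  | none =>
    symm
    rw [← Option.not_isSome_iff_eq_none, kth_isSome]
    intro hlt
    have hsub : rowA g R.entry row ⊆ (Finset.range j).image (fun k => (R.entry row k).getD 0) := by
      intro w hw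
      obtain ⟨k, hk⟩ := (mem_rowA R).mp hw
      have hkj : k < j := by
        by_contra hge
        push_neg at hge
        have := R.left row k j (by rw [hk]; rfl) hge
        rw [h] at this
        exact absurd this (by simp)
      exact Finset.mem_image.mpr ⟨k, Finset.mem_range.mpr hkj, by rw [hk]; rfl⟩
    have := Finset.card_le_card hsub
    have := Finset.card_image_le (s := Finset.range j) (f := fun k => (R.entry row k).getD 0)
    rw [Finset.card_range] at this
    omega

lemma isSome_iff (R : TrSSYT g r i) (row : Fin (r+1)) (j : ℕ) :
    (R.entry row j).isSome ↔ j < (rowA g R.entry row).card := by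
  rw [entry_eq_kth R row j, kth_isSome]

lemma cardA_antitone (R : TrSSYT g r i) {row row' : Fin (r+1)} (h : row' ≤ row) :
    (rowA g R.entry row).card ≤ (rowA g R.entry row').card := by
  rcases Nat.eq_zero_or_pos (rowA g R.entry row).card with h0 | hpos
  · omega
  have h1 : (R.entry row ((rowA g R.entry row).card - 1)).isSome :=
    (isSome_iff R row _).mpr (by omega)
  have h2 := R.down row row' _ h1 h
  have := (isSome_iff R row' _).mp h2
  omega

lemma dominance (R : TrSSYT g r i) {row row' : Fin (r+1)} (h : row' < row) :
    DomLE (rowA g R.entry row) (rowA g R.entry row') := by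
  apply dom_of_kth (cardA_antitone R (le_of_lt h))
  intro j v v' hv hv'
  rw [← entry_eq_kth] at hv hv'
  exact R.col_weak row' row j v' v hv' hv h

lemma ncard_content (f : Fin (r+1) → ℕ → Option ℕ) (v : ℕ)
    (hf : ∀ row j, f row j = kth (rowA g f row) j) :
    {p : Fin (r+1) × ℕ | f p.1 p.2 = some v}.ncard
      = (Finset.univ.filter (fun row => v ∈ rowA g f row)).card := by
  have hset : {p : Fin (r+1) × ℕ | f p.1 p.2 = some v}
      = ↑((Finset.univ.filter (fun row => v ∈ rowA g f row)).image
          (fun row => (row, ((rowA g f row).filter (· < v)).card))) := by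
    ext p
    simp only [Set.mem_setOf_eq, Finset.coe_image, Set.mem_image, Finset.mem_coe,
      Finset.mem_filter, Finset.mem_univ, true_and]
    constructor
    · intro h
      rw [hf] at h
      obtain ⟨hmem, hcard⟩ := kth_eq_some.mp h
      exact ⟨p.1, hmem, by rw [hcard]⟩
    · rintro ⟨row, hmem, rfl⟩
      rw [hf]
      exact kth_eq_some.mpr ⟨hmem, rfl⟩
  rw [hset, Set.ncard_coe_finset]
  apply Finset.card_image_of_injOn
  intro a _ b _ hab
  exact congrArg Prod.fst hab

/-- entries of the complementary tableau -/
noncomputable def compEntry (g : ℕ) {r : ℕ} (f : Fin (r+1) → ℕ → Option ℕ)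
    (row : Fin (r+1)) (j : ℕ) : Option ℕ :=
  kth (Finset.Icc 1 g \ rowA g f row.rev) j

lemma mem_rowA_gen {f : Fin (r+1) → ℕ → Option ℕ} {row : Fin (r+1)} {v : ℕ} :
    v ∈ rowA g f row ↔ v ∈ Finset.Icc 1 g ∧ ∃ j ∈ Finset.range g, f row j = some v :=
  Finset.mem_filter

lemma rowA_comp (f : Fin (r+1) → ℕ → Option ℕ) (row : Fin (r+1)) :
    rowA g (compEntry g f) row = Finset.Icc 1 g \ rowA g f row.rev := by
  ext v
  rw [mem_rowA_gen]
  unfold compEntry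
  simp only [Finset.mem_range]
  constructor
  · rintro ⟨-, j, -, hj⟩
    exact (kth_eq_some.mp hj).1
  · intro hv
    have hv' := hv
    have hvIcc : v ∈ Finset.Icc 1 g := (Finset.mem_sdiff.mp hv).1
    have hg : 1 ≤ g := by
      have := Finset.mem_Icc.mp hvIcc
      omega
    refine ⟨hvIcc, ((Finset.Icc 1 g \ rowA g f row.rev).filter (· < v)).card, ?_, ?_⟩
    · have hsub : (Finset.Icc 1 g \ rowA g f row.rev).filter (· < v)
          ⊆ (Finset.Icc 1 g).erase v := by
        intro u hu
        rw [Finset.mem_filter, Finset.mem_sdiff] at hu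
        exact Finset.mem_erase.mpr ⟨ne_of_lt hu.2, hu.1.1⟩
      have := Finset.card_le_card hsub
      rw [Finset.card_erase_of_mem hvIcc, Nat.card_Icc] at this
      omega
    · exact kth_eq_some.mpr ⟨hv', rfl⟩

lemma compEntry_eq_kth (f : Fin (r+1) → ℕ → Option ℕ) (row : Fin (r+1)) (j : ℕ) :
    compEntry g f row j = kth (rowA g (compEntry g f) row) j := by
  rw [rowA_comp]
  rfl

lemma rowA_content (R : TrSSYT g r i) {v : ℕ} (h1 : 1 ≤ v) (h2 : v ≤ g) :
    (Finset.univ.filter (fun row => v ∈ rowA g R.entry row)).card = i := by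
  rw [← ncard_content R.entry v (entry_eq_kth R)]
  exact R.content v h1 h2

/-- the complementary tableau -/
noncomputable def comp (R : TrSSYT g r i) : TrSSYT g r (r + 1 - i) where
  entry := compEntry g R.entry
  left := by
    intro row j j' hs hle
    unfold compEntry at hs ⊢
    rw [kth_isSome] at hs ⊢
    omega
  down := by
    intro row row' j hs hle
    unfold compEntry at hs ⊢
    rw [kth_isSome] at hs ⊢
    have hrev : row.rev ≤ row'.rev := Fin.rev_le_rev.mpr hle
    have hA := cardA_antitone R hrev
    have c1 := Finset.card_le_card (rowA_subset (g := g) (f := R.entry) (row := row.rev))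
    have c2 := Finset.card_le_card (rowA_subset (g := g) (f := R.entry) (row := row'.rev))
    rw [Nat.card_Icc] at c1 c2
    rw [Finset.card_sdiff_of_subset rowA_subset, Nat.card_Icc] at hs ⊢
    omega
  vals := by
    intro row j v h
    unfold compEntry at h
    have := (kth_eq_some.mp h).1
    rw [Finset.mem_sdiff, Finset.mem_Icc] at this
    exact this.1
  content := by
    intro v h1 h2
    rw [ncard_content (compEntry g R.entry) v (compEntry_eq_kth R.entry)]
    have hIcc : v ∈ Finset.Icc 1 g := Finset.mem_Icc.mpr ⟨h1, h2⟩
    have hfe : Finset.univ.filter (fun row => v ∈ rowA g (compEntry g R.entry) row)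
        = Finset.univ.filter (fun row : Fin (r+1) => ¬ v ∈ rowA g R.entry row.rev) := by
      ext row
      simp only [Finset.mem_filter, Finset.mem_univ, true_and]
      rw [rowA_comp, Finset.mem_sdiff]
      simp [hIcc]
    rw [hfe]
    have himg : Finset.univ.filter (fun row : Fin (r+1) => v ∈ rowA g R.entry row.rev)
        = (Finset.univ.filter (fun row : Fin (r+1) => v ∈ rowA g R.entry row)).image Fin.rev := by
      ext row
      simp only [Finset.mem_filter, Finset.mem_univ, true_and, Finset.mem_image]
      constructor
      · intro h; exact ⟨row.rev, h, Fin.rev_rev row⟩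
      · rintro ⟨σ, hσ, rfl⟩; rw [Fin.rev_rev]; exact hσ
    have hcard : (Finset.univ.filter (fun row : Fin (r+1) => v ∈ rowA g R.entry row.rev)).card
        = i := by
      rw [himg, Finset.card_image_of_injective _ Fin.rev_injective, rowA_content R h1 h2]
    have := Finset.card_filter_add_card_filter_not
      (s := (Finset.univ : Finset (Fin (r+1))))
      (p := fun row : Fin (r+1) => v ∈ rowA g R.entry row.rev)
    rw [Finset.card_univ, Fintype.card_fin] at this
    omega
  row_strict := by
    intro row j j' a b ha hb hlt
    exact kth_strict ha hb hlt
  col_weak := by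
    intro row row' j a b ha hb hlt
    unfold compEntry at ha hb
    have hrev : row'.rev < row.rev := Fin.rev_lt_rev.mpr hlt
    have hdom := dominance R hrev
    have hdomC := dom_compl rowA_subset rowA_subset hdom
    exact kth_of_dom hdomC hb ha

lemma comp_entry_congr {i i' : ℕ} (R : TrSSYT g r i) (S : TrSSYT g r i')
    (h : R.entry = S.entry) : (comp R).entry = (comp S).entry := by
  show compEntry g R.entry = compEntry g S.entry
  rw [h]

lemma comp_comp_entry (R : TrSSYT g r i) : (comp (comp R)).entry = R.entry := by
  funext row j
  have h0 : (comp (comp R)).entry row j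
      = kth (Finset.Icc 1 g \ rowA g (compEntry g R.entry) row.rev) j := rfl
  rw [h0, rowA_comp, Fin.rev_rev, Finset.sdiff_sdiff_eq_self rowA_subset]
  exact (entry_eq_kth R row j).symm

lemma TrSSYT.ext' {R S : TrSSYT g r i} (h : R.entry = S.entry) : R = S := by
  cases R; cases S
  simp only at h
  subst h
  rfl

/-- cast a tableau along an equality of contents -/
def castT {i i' : ℕ} (h : i = i') (R : TrSSYT g r i) : TrSSYT g r i' := h ▸ R

lemma castT_entry {i i' : ℕ} (h : i = i') (R : TrSSYT g r i) :
    (castT h R).entry = R.entry := by subst h; rfl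


end Stmt5

open Stmt5

/-- For 1 ≤ i ≤ r there is a bijection φ_i : TrSSYT(g,r,i) ≃ TrSSYT(g,r,r+1−i)
such that the shapes of R and φ_i(R) are complementary in the (r+1)×g rectangle
(the shape of φ_i(R), rotated 180°, fills the complement of the shape of R). -/
theorem stmt_5 (g r i : ℕ) (h1 : 1 ≤ i) (h2 : i ≤ r) :
    ∃ φ : TrSSYT g r i ≃ TrSSYT g r (r + 1 - i),
      ∀ (R : TrSSYT g r i) (row : Fin (r + 1)) (j : Fin g),
        (R.entry row (j : ℕ)).isSome ↔ ¬ ((φ R).entry row.rev ((j.rev : Fin g) : ℕ)).isSome := by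
  have e : r + 1 - (r + 1 - i) = i := by omega
  refine ⟨{ toFun := comp, invFun := fun S => castT e (comp S),
            left_inv := ?_, right_inv := ?_ }, ?_⟩
  · intro R
    apply TrSSYT.ext'
    rw [castT_entry]
    exact comp_comp_entry R
  · intro S
    apply TrSSYT.ext'
    rw [comp_entry_congr (castT e (comp S)) (comp S) (castT_entry e (comp S))]
    exact comp_comp_entry S
  · intro R row j
    simp only [Equiv.coe_fn_mk]
    rw [isSome_iff R row (j : ℕ), isSome_iff (comp R) row.rev ((j.rev : Fin g) : ℕ)]
    have hA : rowA g (comp R).entry row.rev = Finset.Icc 1 g \ rowA g R.entry row := by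
      show rowA g (compEntry g R.entry) row.rev = _
      rw [rowA_comp, Fin.rev_rev]
    rw [hA, Finset.card_sdiff_of_subset rowA_subset, Nat.card_Icc]
    have hle : (rowA g R.entry row).card ≤ g := by
      have := Finset.card_le_card (rowA_subset (g := g) (f := R.entry) (row := row))
      rw [Nat.card_Icc] at this
      omega
    have hjg : (j : ℕ) < g := j.isLt
    have hrev : ((j.rev : Fin g) : ℕ) = g - ((j : ℕ) + 1) := Fin.val_rev j
    rw [hrev]
    omega
end

section
/- The cardinality of TrSSYT(g,r,i) equals the cardinality of TrSSYT(g,r,r+1−i) for all 1 ≤ i ≤ r. -/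
/-! A tableau is determined by the sets `R₀, …, R_r ⊆ {1, …, g}` of entries of its rows, since
each row lists its set in increasing order. Left-justified rows with weakly increasing columns
amount to the dominance condition `#{x ∈ R_ρ' | x ≤ c} ≤ #{x ∈ R_ρ | x ≤ c}` for `ρ ≤ ρ'`, and
the content condition says that every value lies in exactly `i` of the sets. Replacing `R_ρ` by
`{1, …, g} \ R_(r - ρ)` is an involution that preserves dominance (the counts get subtracted from
those of `{1, …, g}`, and the order of the rows is reversed) and turns `i` into `r + 1 - i`. -/

open Finset

namespace Finset

variable {α : Type*} [LinearOrder α] {s : Finset α} {j : ℕ} {a : α}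

theorem sort_getElem?_eq_some_iff :
    s.sort[j]? = some a ↔ a ∈ s ∧ #{x ∈ s | x < a} = j := by
  have rank_eq : ∀ {j a}, s.sort[j]? = some a → #{x ∈ s | x < a} = j := by
    intro j a h
    obtain ⟨hj, rfl⟩ := List.getElem?_eq_some_iff.mp h
    rw [length_sort] at hj
    set e := s.orderEmbOfFin rfl
    have he : s.sort[j] = e ⟨j, hj⟩ := (s.orderEmbOfFin_apply rfl ⟨j, hj⟩).symm
    have : {x ∈ s | x < e ⟨j, hj⟩} = (Iio ⟨j, hj⟩).map e.toEmbedding := by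
      ext x
      simp only [mem_filter, mem_map, mem_Iio, RelEmbedding.coe_toEmbedding]
      constructor
      · rintro ⟨hx, hlt⟩
        obtain ⟨k, rfl⟩ : x ∈ Set.range e := by rwa [s.range_orderEmbOfFin]
        exact ⟨k, e.lt_iff_lt.mp hlt, rfl⟩
      · rintro ⟨k, hk, rfl⟩
        exact ⟨s.orderEmbOfFin_mem rfl k, e.lt_iff_lt.mpr hk⟩
    rw [he, this, card_map, Fin.card_Iio]
  constructor
  · intro h
    exact ⟨(mem_sort _).mp (List.mem_of_getElem? h), rank_eq h⟩
  · rintro ⟨ha, rfl⟩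
    obtain ⟨k, hk⟩ := List.mem_iff_getElem?.mp ((mem_sort (· ≤ ·)).mpr ha)
    rwa [rank_eq hk]

theorem mem_iff_exists_sort_getElem?_eq_some : a ∈ s ↔ ∃ j : ℕ, s.sort[j]? = some a :=
  ⟨fun ha => ⟨_, sort_getElem?_eq_some_iff.mpr ⟨ha, rfl⟩⟩,
    fun ⟨_, ha⟩ => (sort_getElem?_eq_some_iff.mp ha).1⟩

theorem isSome_sort_getElem?_iff : (s.sort[j]?).isSome ↔ j < #s := by
  simp

theorem lt_of_sort_getElem?_eq_some {k : ℕ} {b : α} (ha : s.sort[j]? = some a)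
    (hb : s.sort[k]? = some b) (hjk : j < k) : a < b := by
  rw [sort_getElem?_eq_some_iff] at ha hb
  by_contra! hba
  have : #{x ∈ s | x < b} ≤ #{x ∈ s | x < a} :=
    card_le_card (monotone_filter_right s fun x _ hx => hx.trans_le hba)
  omega

theorem lt_card_filter_le_iff {t : α} :
    j < #{x ∈ s | x ≤ t} ↔ ∃ a, s.sort[j]? = some a ∧ a ≤ t := by
  constructor
  · intro hj
    obtain ⟨a, ha⟩ := Option.isSome_iff_exists.mp (isSome_sort_getElem?_iff.mpr hj)
    obtain ⟨has, hrank⟩ := sort_getElem?_eq_some_iff.mp ha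
    rw [mem_filter] at has
    refine ⟨a, sort_getElem?_eq_some_iff.mpr ⟨has.1, ?_⟩, has.2⟩
    rwa [filter_filter, filter_congr fun x _ => and_iff_right_of_imp
      fun hx => hx.le.trans has.2] at hrank
  · rintro ⟨a, ha, hat⟩
    obtain ⟨has, rfl⟩ := sort_getElem?_eq_some_iff.mp ha
    have : insert a {x ∈ s | x < a} ⊆ {x ∈ s | x ≤ t} := by
      intro x hx
      simp only [mem_insert, mem_filter] at hx ⊢
      rcases hx with rfl | ⟨hxs, hxa⟩
      exacts [⟨has, hat⟩, ⟨hxs, hxa.le.trans hat⟩]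
    simpa using card_le_card this

theorem forall_card_filter_le_le_iff {t : Finset α} :
    (∀ c, #{x ∈ t | x ≤ c} ≤ #{x ∈ s | x ≤ c}) ↔
      ∀ (j : ℕ) b, t.sort[j]? = some b → ∃ a, s.sort[j]? = some a ∧ a ≤ b := by
  constructor
  · intro h j b hb
    exact lt_card_filter_le_iff.mp <|
      (lt_card_filter_le_iff.mpr ⟨b, hb, le_rfl⟩ : j < #{x ∈ t | x ≤ b}).trans_le (h b)
  · intro h c
    refine le_of_forall_lt fun j hj => ?_
    obtain ⟨b, hb, hbc⟩ := lt_card_filter_le_iff.mp hj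
    obtain ⟨a, ha, hab⟩ := h j b hb
    exact lt_card_filter_le_iff.mpr ⟨a, ha, hab.trans hbc⟩

end Finset

section PartialSequence

variable {α : Type*} [LinearOrder α] {f : ℕ → Option α} {s : Finset α}

theorem eq_of_eq_some_of_strictMono (hlt : ∀ j k a b, f j = some a → f k = some b → j < k → a < b)
    {j k : ℕ} {a : α} (hj : f j = some a) (hk : f k = some a) : j = k := by
  by_contra hne
  rcases Nat.lt_or_gt_of_ne hne with h | h
  exacts [(hlt _ _ _ _ hj hk h).false, (hlt _ _ _ _ hk hj h).false]

theorem card_filter_lt_of_eq_some (hleft : ∀ j k, k ≤ j → (f j).isSome → (f k).isSome)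
    (hlt : ∀ j k a b, f j = some a → f k = some b → j < k → a < b)
    (hs : ∀ a, a ∈ s ↔ ∃ j, f j = some a) {k : ℕ} {a : α} (hk : f k = some a) :
    #{x ∈ s | x < a} = k := by
  have eq_some_of_lt : ∀ m < k, ∃ b, f m = some b :=
    fun m hm => Option.isSome_iff_exists.mp (hleft k m hm.le (by simp [hk]))
  have himage : {x ∈ s | x < a} = (range k).image (fun m => (f m).getD a) := by
    ext x
    simp only [mem_filter, hs, mem_image, mem_range]
    constructor
    · rintro ⟨⟨m, hm⟩, hxa⟩
      refine ⟨m, ?_, by simp [hm]⟩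
      by_contra! hkm
      rcases hkm.eq_or_lt with rfl | hkm
      · simp_all
      · exact (hlt k m a x hk hm hkm).not_gt hxa
    · rintro ⟨m, hm, rfl⟩
      obtain ⟨b, hb⟩ := eq_some_of_lt m hm
      simpa [hb] using ⟨⟨m, hb⟩, hlt m k b a hb hk hm⟩
  rw [himage, card_image_of_injOn, card_range]
  intro m hm m' hm' hmm'
  obtain ⟨b, hb⟩ := eq_some_of_lt m (mem_range.mp hm)
  obtain ⟨b', hb'⟩ := eq_some_of_lt m' (mem_range.mp hm')
  simp only [hb, hb', Option.getD_some] at hmm'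
  subst hmm'
  exact eq_of_eq_some_of_strictMono hlt hb hb'

theorem eq_sort_getElem?_of_strictMono (hleft : ∀ j k, k ≤ j → (f j).isSome → (f k).isSome)
    (hlt : ∀ j k a b, f j = some a → f k = some b → j < k → a < b)
    (hs : ∀ a, a ∈ s ↔ ∃ j, f j = some a) (j : ℕ) : f j = s.sort[j]? := by
  refine Option.ext fun a => ?_
  rw [sort_getElem?_eq_some_iff]
  constructor
  · intro ha
    exact ⟨(hs a).mpr ⟨j, ha⟩, card_filter_lt_of_eq_some hleft hlt hs ha⟩
  · rintro ⟨has, rfl⟩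
    obtain ⟨k, hk⟩ := (hs a).mp has
    rwa [card_filter_lt_of_eq_some hleft hlt hs hk]

end PartialSequence

theorem ncard_eq_card_filter_mem {ι α : Type*} [Fintype ι] [DecidableEq α]
    (e : ι → ℕ → Option α) (s : ι → Finset α) (a : α) (hs : ∀ ρ, a ∈ s ρ ↔ ∃ j, e ρ j = some a)
    (hinj : ∀ ρ j k, e ρ j = some a → e ρ k = some a → j = k) :
    {p : ι × ℕ | e p.1 p.2 = some a}.ncard = #{ρ | a ∈ s ρ} := by
  rw [← Set.InjOn.ncard_image (f := Prod.fst), ← Set.ncard_coe_finset]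
  · congr 1
    ext ρ
    simp [hs]
  · rintro ⟨ρ, j⟩ hj ⟨ρ', k⟩ hk (rfl : ρ = ρ')
    rw [hinj ρ j k hj hk]

namespace TrSSYT

variable {g r i : ℕ}

theorem entry_injective : Function.Injective (entry : TrSSYT g r i → _) := by
  rintro ⟨⟩ ⟨⟩ rfl
  rfl

open scoped Classical in
noncomputable def row (T : TrSSYT g r i) (ρ : Fin (r + 1)) : Finset ℕ :=
  {v ∈ Icc 1 g | ∃ j, T.entry ρ j = some v}

variable {T : TrSSYT g r i} {ρ : Fin (r + 1)}

theorem mem_row {v : ℕ} : v ∈ T.row ρ ↔ ∃ j, T.entry ρ j = some v := by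
  classical
  rw [row, mem_filter, and_iff_right_iff_imp]
  rintro ⟨j, hj⟩
  exact mem_Icc.mpr (T.vals ρ j v hj)

theorem row_subset_Icc : T.row ρ ⊆ Icc 1 g := by
  classical
  exact filter_subset _ _

theorem entry_eq_sort_getElem? (j : ℕ) : T.entry ρ j = (T.row ρ).sort[j]? :=
  eq_sort_getElem?_of_strictMono (fun j k hkj h => T.left ρ j k h hkj) (T.row_strict ρ)
    (fun _ => mem_row) j

theorem card_filter_row_le {ρ' : Fin (r + 1)} (h : ρ ≤ ρ') (c : ℕ) :
    #{x ∈ T.row ρ' | x ≤ c} ≤ #{x ∈ T.row ρ | x ≤ c} := by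
  refine forall_card_filter_le_le_iff.mpr (fun j b hb => ?_) c
  simp only [← entry_eq_sort_getElem?] at hb ⊢
  obtain ⟨a, ha⟩ := Option.isSome_iff_exists.mp (T.down ρ' ρ j (by simp [hb]) h)
  refine ⟨a, ha, ?_⟩
  rcases h.eq_or_lt with rfl | hlt
  · exact (Option.some.inj (ha.symm.trans hb)).le
  · exact T.col_weak ρ ρ' j a b ha hb hlt

theorem card_filter_mem_row {v : ℕ} (hv : v ∈ Icc 1 g) : #{ρ | v ∈ T.row ρ} = i := by
  obtain ⟨h1, h2⟩ := mem_Icc.mp hv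
  rw [← ncard_eq_card_filter_mem T.entry T.row v (fun _ => mem_row)
    (fun ρ _ _ => eq_of_eq_some_of_strictMono (T.row_strict ρ))]
  exact T.content v h1 h2

end TrSSYT

@[ext]
structure RowFamily (g r i : ℕ) where
  rows : Fin (r + 1) → Finset ℕ
  subset_Icc : ∀ ρ, rows ρ ⊆ Icc 1 g
  card_filter_le : ∀ ρ ρ', ρ ≤ ρ' → ∀ c, #{x ∈ rows ρ' | x ≤ c} ≤ #{x ∈ rows ρ | x ≤ c}
  card_filter_mem : ∀ v ∈ Icc 1 g, #{ρ | v ∈ rows ρ} = i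

namespace RowFamily

variable {g r i j : ℕ}

theorem exists_sort_getElem?_le (F : RowFamily g r i) {ρ ρ' : Fin (r + 1)} (h : ρ ≤ ρ')
    {k b : ℕ} (hb : (F.rows ρ').sort[k]? = some b) :
    ∃ a, (F.rows ρ).sort[k]? = some a ∧ a ≤ b :=
  forall_card_filter_le_le_iff.mp (F.card_filter_le ρ ρ' h) k b hb

def toTrSSYT (F : RowFamily g r i) : TrSSYT g r i where
  entry ρ k := (F.rows ρ).sort[k]?
  left ρ k k' h hk := by
    rw [isSome_sort_getElem?_iff] at h ⊢
    omega
  down ρ ρ' k h hle := by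
    obtain ⟨b, hb⟩ := Option.isSome_iff_exists.mp h
    obtain ⟨a, ha, -⟩ := F.exists_sort_getElem?_le hle hb
    simp [ha]
  vals ρ k v h := mem_Icc.mp (F.subset_Icc ρ (sort_getElem?_eq_some_iff.mp h).1)
  content v h1 h2 := by
    rw [ncard_eq_card_filter_mem _ F.rows v (fun _ => mem_iff_exists_sort_getElem?_eq_some)]
    · exact F.card_filter_mem v (mem_Icc.mpr ⟨h1, h2⟩)
    · exact fun ρ _ _ => eq_of_eq_some_of_strictMono fun _ _ _ _ => lt_of_sort_getElem?_eq_some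
  row_strict ρ k k' a b := lt_of_sort_getElem?_eq_some
  col_weak ρ ρ' k a b ha hb hlt := by
    obtain ⟨a', ha', hab⟩ := F.exists_sort_getElem?_le hlt.le hb
    rw [ha] at ha'
    exact (Option.some.inj ha') ▸ hab

def compl (F : RowFamily g r i) (hij : i + j = r + 1) : RowFamily g r j where
  rows ρ := Icc 1 g \ F.rows (Fin.rev ρ)
  subset_Icc _ := sdiff_subset
  card_filter_le ρ ρ' h c := by
    have card_filter_compl : ∀ σ : Fin (r + 1), #{x ∈ Icc 1 g \ F.rows σ | x ≤ c} =
        #{x ∈ Icc 1 g | x ≤ c} - #{x ∈ F.rows σ | x ≤ c} := by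
      intro σ
      rw [← card_sdiff_of_subset (monotone_filter_left _ (F.subset_Icc σ))]
      congr 1
      ext x
      simp only [mem_filter, mem_sdiff]
      tauto
    rw [card_filter_compl, card_filter_compl]
    exact Nat.sub_le_sub_left (F.card_filter_le _ _ (Fin.rev_le_rev.mpr h) c) _
  card_filter_mem v hv := by
    have hcompl := card_filter_add_card_filter_not (s := univ) (fun ρ => v ∈ F.rows ρ)
    rw [F.card_filter_mem v hv, card_univ, Fintype.card_fin] at hcompl
    have hrev : #{ρ : Fin (r + 1) | v ∈ Icc 1 g \ F.rows ρ.rev} = #{ρ | v ∉ F.rows ρ} := by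
      refine card_nbij' Fin.rev Fin.rev ?_ ?_ ?_ ?_ <;> simp [Set.MapsTo, Set.LeftInvOn, hv]
    omega

theorem compl_compl (F : RowFamily g r i) (hij : i + j = r + 1) (hji : j + i = r + 1) :
    (F.compl hij).compl hji = F := by
  ext1
  funext ρ
  simp only [compl, Fin.rev_rev]
  exact Finset.sdiff_sdiff_eq_self (F.subset_Icc ρ)

def complEquiv (hij : i + j = r + 1) : RowFamily g r i ≃ RowFamily g r j where
  toFun F := F.compl hij
  invFun F := F.compl (by omega)
  left_inv F := F.compl_compl _ _
  right_inv F := F.compl_compl _ _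

end RowFamily

noncomputable def TrSSYT.equivRowFamily {g r i : ℕ} : TrSSYT g r i ≃ RowFamily g r i where
  toFun T := ⟨T.row, fun _ => T.row_subset_Icc, fun _ _ => T.card_filter_row_le,
    fun _ => T.card_filter_mem_row⟩
  invFun F := F.toTrSSYT
  left_inv T := TrSSYT.entry_injective <| funext₂ fun _ _ => TrSSYT.entry_eq_sort_getElem? _ |>.symm
  right_inv F := by
    ext ρ v
    rw [TrSSYT.mem_row, mem_iff_exists_sort_getElem?_eq_some]
    rfl

theorem stmt_6_general (g r i : ℕ) (h2 : i ≤ r) :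
    Nat.card (TrSSYT g r i) = Nat.card (TrSSYT g r (r + 1 - i)) :=
  Nat.card_congr <| TrSSYT.equivRowFamily.trans <|
    (RowFamily.complEquiv (by omega)).trans TrSSYT.equivRowFamily.symm

/-- |TrSSYT(g,r,i)| = |TrSSYT(g,r,r+1−i)| for 1 ≤ i ≤ r. -/
theorem stmt_6 (g r i : ℕ) (h1 : 1 ≤ i) (h2 : i ≤ r) :
    Nat.card (TrSSYT g r i) = Nat.card (TrSSYT g r (r + 1 - i)) :=
  stmt_6_general g r i h2
end

section
/- When r = 1, the bijection φ from transposed SSYT of content (1,…,1) with height ≤ 2 (i.e., standard Young tableaux of height ≤ 2) to 180°-rotated standard Young tableaux of size g and height ≤ 2 is given by rotating the tableau 180° in its 2×g rectangle; that is, φ(R) is the 180° rotation of R. -/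
namespace Stmt9Aux

variable {g : ℕ}

lemma entry_lt {g r i : ℕ} (R : TrSSYT g r i) (row : Fin (r+1)) :
    ∀ j v, R.entry row j = some v → j < v := by
  intro j
  induction j with
  | zero => intro v h; exact (R.vals row 0 v h).1
  | succ n ih =>
    intro v h
    have hs : (R.entry row n).isSome := R.left row (n+1) n (by rw [h]; rfl) (by omega)
    obtain ⟨w, hw⟩ := Option.isSome_iff_exists.mp hs
    have h1 := ih w hw
    have h2 := R.row_strict row n (n+1) w v hw h (by omega)
    omega

lemma entry_none {g r i : ℕ} (R : TrSSYT g r i) (row : Fin (r+1)) (j : ℕ)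
    (hj : g ≤ j) : R.entry row j = none := by
  cases he : R.entry row j with
  | none => rfl
  | some v =>
    have := entry_lt R row j v he
    have := (R.vals row j v he).2
    omega

lemma unique_cell (R : TrSSYT g 1 1) {v : ℕ} (hv1 : 1 ≤ v) (hvg : v ≤ g)
    {p q : Fin 2 × ℕ} (hp : R.entry p.1 p.2 = some v) (hq : R.entry q.1 q.2 = some v) :
    p = q := by
  obtain ⟨a, ha⟩ := Set.ncard_eq_one.mp (R.content v hv1 hvg)
  have hpa : p ∈ ({a} : Set (Fin 2 × ℕ)) := ha ▸ hp
  have hqa : q ∈ ({a} : Set (Fin 2 × ℕ)) := ha ▸ hq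
  simp only [Set.mem_singleton_iff] at hpa hqa
  rw [hpa, hqa]

lemma exists_cell (R : TrSSYT g 1 1) {v : ℕ} (hv1 : 1 ≤ v) (hvg : v ≤ g) :
    ∃ p : Fin 2 × ℕ, R.entry p.1 p.2 = some v := by
  obtain ⟨a, ha⟩ := Set.ncard_eq_one.mp (R.content v hv1 hvg)
  refine ⟨a, ?_⟩
  have : a ∈ ({a} : Set (Fin 2 × ℕ)) := rfl
  rw [← ha] at this; exact this

def fwd (R : TrSSYT g 1 1) : RotSYT g 1 where
  entry i j := R.entry i.rev ((j.rev : Fin g) : ℕ)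
  right i j j' hs hle :=
    R.left i.rev _ _ hs (Fin.rev_le_rev.mpr hle)
  up i i' j hs hle :=
    R.down i.rev i'.rev _ hs (Fin.rev_le_rev.mpr hle)
  vals i j v h := R.vals _ _ _ h
  content v hv1 hvg := by
    obtain ⟨⟨row, jj⟩, hmem⟩ := exists_cell R hv1 hvg
    simp only at hmem
    have hlt : jj < g := lt_of_lt_of_le (entry_lt R row jj v hmem) hvg
    refine ⟨(row.rev, (⟨jj, hlt⟩ : Fin g).rev), ?_, ?_⟩
    · simpa only [Fin.rev_rev] using hmem
    · rintro ⟨i, j⟩ hq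
      have h2 := unique_cell R hv1 hvg (p := (i.rev, ((j.rev : Fin g) : ℕ)))
        (q := (row, jj)) hq hmem
      have h3 : i.rev = row := congrArg Prod.fst h2
      have h4 : ((j.rev : Fin g) : ℕ) = jj := congrArg Prod.snd h2
      have hi : i = row.rev := by rw [← h3, Fin.rev_rev]
      have hj : j = (⟨jj, hlt⟩ : Fin g).rev := by
        have : j.rev = (⟨jj, hlt⟩ : Fin g) := Fin.ext h4
        rw [← this, Fin.rev_rev]
      rw [hi, hj]
  row_dec i j j' a b ha hb hlt :=
    R.row_strict i.rev _ _ b a hb ha (Fin.rev_lt_rev.mpr hlt)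
  col_dec i i' j a b ha hb hlt := by
    have hle : b ≤ a := R.col_weak i'.rev i.rev _ b a hb ha (Fin.rev_lt_rev.mpr hlt)
    rcases lt_or_eq_of_le hle with h | h
    · exact h
    · exfalso
      subst h
      have hb1 := (R.vals _ _ _ hb).1
      have hb2 := (R.vals _ _ _ hb).2
      have := unique_cell R hb1 hb2 (p := (i.rev, ((j.rev : Fin g) : ℕ)))
        (q := (i'.rev, ((j.rev : Fin g) : ℕ))) ha hb
      have : i.rev = i'.rev := congrArg Prod.fst this
      have : i = i' := by rw [← Fin.rev_rev i, this, Fin.rev_rev]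
      exact absurd this (ne_of_lt hlt)

def bwd (S : RotSYT g 1) : TrSSYT g 1 1 where
  entry row j := if h : j < g then S.entry row.rev (⟨j, h⟩ : Fin g).rev else none
  left row j j' hs hle := by
    by_cases h : j < g
    · have h' : j' < g := by omega
      rw [dif_pos h] at hs
      rw [dif_pos h']
      exact S.right row.rev _ _ hs (Fin.rev_le_rev.mpr hle)
    · rw [dif_neg h] at hs; exact absurd hs (by simp)
  down row row' j hs hle := by
    by_cases h : j < g
    · rw [dif_pos h] at hs ⊢
      exact S.up row.rev row'.rev _ hs (Fin.rev_le_rev.mpr hle)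
    · rw [dif_neg h] at hs; exact absurd hs (by simp)
  vals row j v hv := by
    by_cases h : j < g
    · rw [dif_pos h] at hv; exact S.vals _ _ _ hv
    · rw [dif_neg h] at hv; exact absurd hv (by simp)
  content v hv1 hvg := by
    obtain ⟨⟨pi, pj⟩, hp, hu⟩ := S.content v hv1 hvg
    simp only at hp
    have hset : {p : Fin 2 × ℕ |
        (if h : p.2 < g then S.entry p.1.rev (⟨p.2, h⟩ : Fin g).rev else none) = some v}
        = {(pi.rev, ((pj.rev : Fin g) : ℕ))} := by
      ext ⟨row, j⟩
      simp only [Set.mem_setOf_eq, Set.mem_singleton_iff, Prod.mk.injEq]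
      constructor
      · intro hmem
        by_cases h : j < g
        · rw [dif_pos h] at hmem
          have := hu (row.rev, (⟨j, h⟩ : Fin g).rev) hmem
          have h1 : row.rev = pi := congrArg Prod.fst this
          have h2 : (⟨j, h⟩ : Fin g).rev = pj := congrArg Prod.snd this
          constructor
          · rw [← h1, Fin.rev_rev]
          · rw [← h2, Fin.rev_rev]
        · rw [dif_neg h] at hmem; exact absurd hmem (by simp)
      · rintro ⟨h1, h2⟩
        subst h1; subst h2
        rw [dif_pos (pj.rev.isLt)]
        simpa only [Fin.eta, Fin.rev_rev] using hp
    rw [hset, Set.ncard_singleton]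
  row_strict row j j' a b ha hb hlt := by
    by_cases h : j < g
    · have h' : j' < g := by
        by_contra hc
        rw [dif_neg hc] at hb; exact absurd hb (by simp)
      rw [dif_pos h] at ha
      rw [dif_pos h'] at hb
      exact S.row_dec row.rev _ _ b a hb ha (Fin.rev_lt_rev.mpr (by exact hlt))
    · rw [dif_neg h] at ha; exact absurd ha (by simp)
  col_weak row row' j a b ha hb hlt := by
    by_cases h : j < g
    · rw [dif_pos h] at ha hb
      exact le_of_lt (S.col_dec row'.rev row.rev _ b a hb ha (Fin.rev_lt_rev.mpr hlt))
    · rw [dif_neg h] at ha; exact absurd ha (by simp)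

lemma tr_ext {A B : TrSSYT g 1 1} (h : A.entry = B.entry) : A = B := by
  cases A; cases B; cases h; rfl

lemma rot_ext {A B : RotSYT g 1} (h : A.entry = B.entry) : A = B := by
  cases A; cases B; cases h; rfl

def phi : TrSSYT g 1 1 ≃ RotSYT g 1 where
  toFun := fwd
  invFun := bwd
  left_inv R := by
    apply tr_ext
    funext row j
    show (if h : j < g then (fwd R).entry row.rev (⟨j, h⟩ : Fin g).rev else none)
      = R.entry row j
    by_cases h : j < g
    · rw [dif_pos h]
      show R.entry row.rev.rev (((⟨j, h⟩ : Fin g).rev.rev : Fin g) : ℕ) = R.entry row j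
      rw [Fin.rev_rev, Fin.rev_rev]
    · rw [dif_neg h]
      exact (entry_none R row j (by omega)).symm
  right_inv S := by
    apply rot_ext
    funext i j
    show (bwd S).entry i.rev ((j.rev : Fin g) : ℕ) = S.entry i j
    show (if h : ((j.rev : Fin g) : ℕ) < g
        then S.entry i.rev.rev (⟨((j.rev : Fin g) : ℕ), h⟩ : Fin g).rev else none) = S.entry i j
    rw [dif_pos (j.rev.isLt), Fin.rev_rev]
    congr 1
    rw [Fin.eta, Fin.rev_rev]

end Stmt9Aux


/-- When r = 1, the bijection φ from TrSSYT(g,1) (standard Young tableaux of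
height ≤ 2) to 180°-rotated SYT of size g and height ≤ 2 is simply 180° rotation
in the 2×g rectangle; moreover each value v is placed in the row not containing
v in R. -/
theorem stmt_9 (g : ℕ) :
    ∃ φ : TrSSYT g 1 1 ≃ RotSYT g 1,
      ∀ (R : TrSSYT g 1 1),
        (∀ (i : Fin 2) (j : Fin g), (φ R).entry i j = R.entry i.rev ((j.rev : Fin g) : ℕ)) ∧
        (∀ (v : ℕ), 1 ≤ v → v ≤ g → ∀ (i : Fin 2) (j : Fin g),
          (φ R).entry i j = some v → ∀ j' : ℕ, R.entry i j' ≠ some v) := by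
  refine ⟨Stmt9Aux.phi, fun R => ⟨fun i j => rfl, ?_⟩⟩
  intro v hv1 hvg i j hij j' hj'
  have hij' : R.entry i.rev ((j.rev : Fin g) : ℕ) = some v := hij
  have heq := Stmt9Aux.unique_cell R hv1 hvg (p := (i.rev, ((j.rev : Fin g) : ℕ)))
    (q := (i, j')) hij' hj'
  have hi : i.rev = i := congrArg Prod.fst heq
  have hv : (i.rev : ℕ) = (i : ℕ) := congrArg Fin.val hi
  rw [Fin.val_rev] at hv
  omega
end

section
/- The number of restricted L-tableaux with parameters (g, r, g+r, i) is equal to the number of L-tableaux with parameters (g, r−i, g+r). -/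
/-- A restricted L-tableau with parameters (g,r,g+r,i): an L-tableau with
parameters (g,r,g+r) whose blue entries lie in {0,…,r−i}. -/
def RestrictedLTableau (g r i : ℕ) : Type :=
  {T : LTableau g r (g + r) //
    ∀ (row : Fin (r + 1)) (j : Fin (g + r - r)) (v : ℕ),
      T.entry row j = Sum.inr v → v ≤ r - i}

namespace StmtAux

lemma ltab_ext {g r d : ℕ} {T S : LTableau g r d} (h : T.entry = S.entry) : T = S := by
  cases T; cases S; cases h; rfl

/-- gap along a column between blue cells -/
lemma blue_gap {g r d : ℕ} (T : LTableau g r d) (j : Fin (d-r)) (k : Fin (r+1)) (a : ℕ)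
    (hk : T.entry k j = Sum.inr a) :
    ∀ n (_hn : k.val + n ≤ r) (b : ℕ), T.entry ⟨k.val + n, by omega⟩ j = Sum.inr b → a + n ≤ b := by
  intro n
  induction n with
  | zero =>
    intro hn b hb
    have hkk : (⟨k.val + 0, by omega⟩ : Fin (r+1)) = k := by ext; simp
    rw [hkk, hk] at hb
    injection hb with h'; omega
  | succ n ih =>
    intro hn b hb
    have hmid : ¬ (T.entry ⟨k.val + n, by omega⟩ j).isLeft := by
      intro hL
      have := T.red_down ⟨k.val + n, by omega⟩ k j hL (by simp [Fin.le_def])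
      rw [hk] at this; simp at this
    obtain ⟨c, hc⟩ : ∃ c, T.entry ⟨k.val + n, by omega⟩ j = Sum.inr c := by
      cases h : T.entry ⟨k.val + n, by omega⟩ j with
      | inl v => rw [h] at hmid; simp at hmid
      | inr c => exact ⟨c, rfl⟩
    have h1 := ih (by omega) c hc
    have h2 := T.blue_col ⟨k.val + n, by omega⟩ ⟨k.val + (n+1), by omega⟩ j c b hc hb
      (by simp [Fin.lt_def])
    omega

/-- gap along a row leftwards from a red cell -/
lemma red_gap {g r d : ℕ} (T : LTableau g r d) (k : Fin (r+1)) (j : Fin (d-r)) (a : ℕ)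
    (hj : T.entry k j = Sum.inl a) :
    ∀ n (_hn : n ≤ j.val), ∃ b, T.entry k ⟨j.val - n, by have := j.isLt; omega⟩ = Sum.inl b ∧ b + n ≤ a := by
  intro n
  induction n with
  | zero =>
    intro hn
    refine ⟨a, ?_, by omega⟩
    have : (⟨j.val - 0, by have := j.isLt; omega⟩ : Fin (d-r)) = j := by ext; simp
    rw [this]; exact hj
  | succ n ih =>
    intro hn
    obtain ⟨b, hb, hba⟩ := ih (by omega)
    have hL : (T.entry k ⟨j.val - (n+1), by have := j.isLt; omega⟩).isLeft := by
      refine T.red_left k ⟨j.val - n, by have := j.isLt; omega⟩ _ ?_ (by simp [Fin.le_def]; omega)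
      rw [hb]; rfl
    obtain ⟨c, hc⟩ : ∃ c, T.entry k ⟨j.val - (n+1), by have := j.isLt; omega⟩ = Sum.inl c := by
      cases h : T.entry k ⟨j.val - (n+1), by have := j.isLt; omega⟩ with
      | inl c => exact ⟨c, rfl⟩
      | inr v => rw [h] at hL; simp at hL
    have := T.red_row k ⟨j.val - (n+1), by have := j.isLt; omega⟩ ⟨j.val - n, by have := j.isLt; omega⟩
      c b hc hb (by simp [Fin.lt_def]; omega)
    exact ⟨c, hc, by omega⟩

/-- a red value is at least its column index plus one -/
lemma red_lb {g r d : ℕ} (T : LTableau g r d) (k : Fin (r+1)) (j : Fin (d-r)) (a : ℕ)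
    (hj : T.entry k j = Sum.inl a) : j.val + 1 ≤ a := by
  obtain ⟨b, hb, hba⟩ := red_gap T k j a hj j.val le_rfl
  have := (T.red_vals k _ b hb).1
  omega

/-- red cells only occur in columns of index < g -/
lemma red_col_lt {g r d : ℕ} (T : LTableau g r d) (k : Fin (r+1)) (j : Fin (d-r)) (a : ℕ)
    (hj : T.entry k j = Sum.inl a) : j.val < g := by
  have h1 := red_lb T k j a hj
  have h2 := (T.red_vals k j a hj).2
  omega

/-- from any blue cell there is a blue cell at the top of its column with the gap bound -/
lemma blue_top {g r d : ℕ} (T : LTableau g r d) (k : Fin (r+1)) (j : Fin (d-r)) (v : ℕ)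
    (h : T.entry k j = Sum.inr v) :
    ∃ b, T.entry ⟨r, by omega⟩ j = Sum.inr b ∧ v + (r - k.val) ≤ b := by
  have hk := k.isLt
  cases htop : T.entry ⟨r, by omega⟩ j with
  | inl w =>
    have := T.red_down ⟨r, by omega⟩ k j (by rw [htop]; rfl) (by simp [Fin.le_def]; omega)
    rw [h] at this; simp at this
  | inr b =>
    refine ⟨b, rfl, ?_⟩
    have : (⟨k.val + (r - k.val), by omega⟩ : Fin (r+1)) = ⟨r, by omega⟩ := by ext; simp; omega
    exact blue_gap T j k v h (r - k.val) (by omega) b (by rw [this]; exact htop)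

/-- blue value is at most its row index -/
lemma blue_le_row {g r d : ℕ} (T : LTableau g r d) (k : Fin (r+1)) (j : Fin (d-r)) (v : ℕ)
    (h : T.entry k j = Sum.inr v) : v ≤ k.val := by
  obtain ⟨b, hb, hvb⟩ := blue_top T k j v h
  have := T.blue_vals _ j b hb
  have := k.isLt
  omega

end StmtAux
namespace StmtAux

/-- In a tableau with blue values ≤ r - i, rows below i are entirely red. -/
lemma low_red {g r i : ℕ} (hi : i ≤ r) (T : LTableau g r (g+r))
    (hT : ∀ (row : Fin (r + 1)) (j : Fin (g + r - r)) (v : ℕ),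
      T.entry row j = Sum.inr v → v ≤ r - i)
    (k : Fin (r+1)) (j : Fin (g+r-r)) (hk : k.val < i) : (T.entry k j).isLeft := by
  cases h : T.entry k j with
  | inl v => rfl
  | inr v =>
    exfalso
    obtain ⟨b, hb, hvb⟩ := blue_top T k j v h
    have := hT _ j b hb
    omega

/-- In a restricted tableau, rows below i are forced to be 1,2,…,g. -/
lemma low_forced {g r i : ℕ} (hi : i ≤ r) (T : LTableau g r (g+r))
    (hT : ∀ (row : Fin (r + 1)) (j : Fin (g + r - r)) (v : ℕ),
      T.entry row j = Sum.inr v → v ≤ r - i)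
    (k : Fin (r+1)) (j : Fin (g+r-r)) (hk : k.val < i) :
    T.entry k j = Sum.inl (j.val + 1) := by
  have hw : g + r - r = g := by omega
  have hjw := j.isLt
  obtain ⟨a, ha⟩ : ∃ a, T.entry k j = Sum.inl a := by
    cases h : T.entry k j with
    | inl a => exact ⟨a, rfl⟩
    | inr v => have := low_red hi T hT k j hk; rw [h] at this; simp at this
  have hlb := red_lb T k j a ha
  -- upper bound via the last column
  have hlast : (T.entry k ⟨g + r - r - 1, by omega⟩).isLeft := low_red hi T hT k _ hk
  obtain ⟨e, he⟩ : ∃ e, T.entry k ⟨g + r - r - 1, by omega⟩ = Sum.inl e := by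
    cases h : T.entry k ⟨g + r - r - 1, by omega⟩ with
    | inl e => exact ⟨e, rfl⟩
    | inr v => rw [h] at hlast; simp at hlast
  have heg := (T.red_vals k _ e he).2
  obtain ⟨b, hb, hba⟩ := red_gap T k ⟨g + r - r - 1, by omega⟩ e he (g + r - r - 1 - j.val)
    (show g + r - r - 1 - j.val ≤ g + r - r - 1 by omega)
  have hbj : (⟨g + r - r - 1 - (g + r - r - 1 - j.val), by omega⟩ : Fin (g+r-r)) = j := by
    ext; simp; omega
  rw [hbj, ha] at hb
  injection hb with hb'
  subst hb'
  rw [ha]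
  congr 1
  omega

/-- In an L-tableau with parameters (g, r', g+r), columns of index ≥ g are forced blue
with entry equal to the row index. -/
lemma right_forced {g r' d : ℕ} (S : LTableau g r' d)
    (k : Fin (r'+1)) (j : Fin (d-r')) (hj : g ≤ j.val) :
    S.entry k j = Sum.inr k.val := by
  obtain ⟨v, hv⟩ : ∃ v, S.entry k j = Sum.inr v := by
    cases h : S.entry k j with
    | inl a => exact absurd (red_col_lt S k j a h) (by omega)
    | inr v => exact ⟨v, rfl⟩
  have hub : v ≤ k.val := blue_le_row S k j v hv
  obtain ⟨b0, hb0⟩ : ∃ b0, S.entry ⟨0, by omega⟩ j = Sum.inr b0 := by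
    cases h : S.entry ⟨0, by omega⟩ j with
    | inl a => exact absurd (red_col_lt S _ j a h) (by omega)
    | inr v => exact ⟨v, rfl⟩
  have hgap := blue_gap S j ⟨0, by omega⟩ b0 hb0 k.val
    (show 0 + k.val ≤ r' by have := k.isLt; omega) v
    (by convert hv using 2; ext; simp)
  rw [hv]
  congr 1
  omega

/-- blue values in a restricted tableau satisfy v + (r - k) ≤ r - i -/
lemma blue_bound {g r i : ℕ} (T : LTableau g r (g+r))
    (hT : ∀ (row : Fin (r + 1)) (j : Fin (g + r - r)) (v : ℕ),
      T.entry row j = Sum.inr v → v ≤ r - i)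
    (k : Fin (r+1)) (j : Fin (g+r-r)) (v : ℕ) (h : T.entry k j = Sum.inr v) :
    v + (r - k.val) ≤ r - i := by
  obtain ⟨b, hb, hvb⟩ := blue_top T k j v h
  have := hT _ j b hb
  omega

end StmtAux
namespace StmtAux

lemma card_rel (g r i v : ℕ) (hi : i ≤ r) (hv1 : 1 ≤ v) (hv2 : v ≤ g)
    (F : Fin (r+1) → Fin (g+r-r) → ℕ ⊕ ℕ)
    (G : Fin (r-i+1) → Fin (g+r-(r-i)) → ℕ ⊕ ℕ)
    (hcompat : ∀ (k : Fin (r-i+1)) (j : Fin (g+r-(r-i))) (hj : j.val < g+r-r),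
      G k j = F ⟨k.val + i, by have := k.isLt; omega⟩ ⟨j.val, hj⟩)
    (hlow : ∀ (k : Fin (r+1)) (j : Fin (g+r-r)), k.val < i → F k j = Sum.inl (j.val+1))
    (hright : ∀ (k : Fin (r-i+1)) (j : Fin (g+r-(r-i))), ¬ j.val < g+r-r → G k j ≠ Sum.inl v) :
    {p : Fin (r+1) × Fin (g+r-r) | F p.1 p.2 = Sum.inl v}.ncard
      = {p : Fin (r-i+1) × Fin (g+r-(r-i)) | G p.1 p.2 = Sum.inl v}.ncard + i := by
  have hw1 : g + r - r = g := by omega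
  have hg : 1 ≤ g := le_trans hv1 hv2
  set B : Set (Fin (r-i+1) × Fin (g+r-(r-i))) := {p | G p.1 p.2 = Sum.inl v} with hB
  have hBj : ∀ p ∈ B, p.2.val < g + r - r := by
    intro p hp
    by_contra hc
    exact hright p.1 p.2 hc hp
  set f : Fin (r-i+1) × Fin (g+r-(r-i)) → Fin (r+1) × Fin (g+r-r) :=
    fun p => (⟨p.1.val + i, by have := p.1.isLt; omega⟩,
              ⟨min p.2.val (g+r-r-1), by omega⟩) with hf
  set lowf : Fin i → Fin (r+1) × Fin (g+r-r) :=
    fun k => (⟨k.val, by have := k.isLt; omega⟩, ⟨v-1, by omega⟩) with hlowf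
  have key : {p : Fin (r+1) × Fin (g+r-r) | F p.1 p.2 = Sum.inl v}
      = (lowf '' Set.univ) ∪ (f '' B) := by
    ext p
    simp only [Set.mem_setOf_eq, Set.mem_union, Set.mem_image, Set.mem_univ, true_and]
    constructor
    · intro hp
      by_cases hk : p.1.val < i
      · left
        have hl := hlow p.1 p.2 hk
        rw [hl] at hp
        injection hp with h'
        refine ⟨⟨p.1.val, hk⟩, ?_⟩
        exact Prod.ext (Fin.ext rfl) (Fin.ext (show v - 1 = p.2.val by omega))
      · right
        have hp1 := p.1.isLt
        have hp2 := p.2.isLt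
        refine ⟨(⟨p.1.val - i, by omega⟩, ⟨p.2.val, by omega⟩), ?_, ?_⟩
        · show G _ _ = Sum.inl v
          rw [hcompat _ _ (show p.2.val < g + r - r from p.2.isLt)]
          have e1 : (⟨p.1.val - i + i, by omega⟩ : Fin (r+1)) = p.1 := Fin.ext (by simp; omega)
          have e2 : (⟨p.2.val, p.2.isLt⟩ : Fin (g+r-r)) = p.2 := Fin.ext rfl
          rw [e1, e2]
          exact hp
        · exact Prod.ext (Fin.ext (show p.1.val - i + i = p.1.val by omega))
            (Fin.ext (show min p.2.val (g+r-r-1) = p.2.val by omega))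
    · rintro (⟨k, rfl⟩ | ⟨q, hq, rfl⟩)
      · have hl := hlow (lowf k).1 (lowf k).2 k.isLt
        rw [hl]
        exact congrArg Sum.inl (show v - 1 + 1 = v by omega)
      · have hqj := hBj q hq
        have hq' : G q.1 q.2 = Sum.inl v := hq
        have h1 : (f q).1 = (⟨q.1.val + i, by have := q.1.isLt; omega⟩ : Fin (r+1)) :=
          Fin.ext rfl
        have h2 : (f q).2 = (⟨q.2.val, hqj⟩ : Fin (g+r-r)) :=
          Fin.ext (show min q.2.val (g+r-r-1) = q.2.val by omega)
        rw [h1, h2]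
        exact (hcompat q.1 q.2 hqj).symm.trans hq'
  have hdisj : Disjoint (lowf '' Set.univ) (f '' B) := by
    rw [Set.disjoint_left]
    rintro p ⟨k, -, rfl⟩ ⟨q, -, hq⟩
    have h1 : q.1.val + i = k.val := congrArg (fun p => (p.1 : Fin (r+1)).val) hq
    have := k.isLt
    omega
  have hclow : (lowf '' Set.univ).ncard = i := by
    have hinj : Function.Injective lowf := by
      intro a b hab
      have h1 : (a : ℕ) = (b : ℕ) := congrArg (fun p => (p.1 : Fin (r+1)).val) hab
      exact Fin.ext h1
    rw [Set.ncard_image_of_injective _ hinj, Set.ncard_univ]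
    simp
  have hcf : (f '' B).ncard = B.ncard := by
    refine Set.ncard_image_of_injOn ?_
    intro q hq q' hq' he
    have h1 : q.1.val + i = q'.1.val + i := congrArg (fun p => (p.1 : Fin (r+1)).val) he
    have h2 : min q.2.val (g+r-r-1) = min q'.2.val (g+r-r-1) :=
      congrArg (fun p => (p.2 : Fin (g+r-r)).val) he
    have hj1 := hBj q hq
    have hj2 := hBj q' hq'
    exact Prod.ext (Fin.ext (by omega)) (Fin.ext (by omega))
  rw [key, Set.ncard_union_eq hdisj, hclow, hcf]
  omega

end StmtAux
namespace StmtAux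

def fwdEntry (g r i : ℕ) (hi : i ≤ r) (T : LTableau g r (g+r)) :
    Fin (r-i+1) → Fin (g+r-(r-i)) → ℕ ⊕ ℕ :=
  fun k j =>
    if h : j.val < g + r - r then T.entry ⟨k.val + i, by have := k.isLt; omega⟩ ⟨j.val, h⟩
    else Sum.inr k.val

lemma fwdEntry_pos {g r i : ℕ} (hi : i ≤ r) (T : LTableau g r (g+r))
    (k : Fin (r-i+1)) (j : Fin (g+r-(r-i))) (h : j.val < g + r - r) :
    fwdEntry g r i hi T k j = T.entry ⟨k.val + i, by have := k.isLt; omega⟩ ⟨j.val, h⟩ :=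
  dif_pos h

lemma fwdEntry_neg {g r i : ℕ} (hi : i ≤ r) (T : LTableau g r (g+r))
    (k : Fin (r-i+1)) (j : Fin (g+r-(r-i))) (h : ¬ j.val < g + r - r) :
    fwdEntry g r i hi T k j = Sum.inr k.val :=
  dif_neg h

def fwd (g r i : ℕ) (hi : i ≤ r) (T : LTableau g r (g+r))
    (hT : ∀ (row : Fin (r + 1)) (j : Fin (g + r - r)) (v : ℕ),
      T.entry row j = Sum.inr v → v ≤ r - i) :
    LTableau g (r-i) (g+r) where
  entry := fwdEntry g r i hi T
  red_left := by
    intro k j j' hL hle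
    by_cases h : j.val < g + r - r
    · rw [fwdEntry_pos hi T k j h] at hL
      have hj' : j'.val < g + r - r := by have := Fin.le_def.mp hle; omega
      rw [fwdEntry_pos hi T k j' hj']
      exact T.red_left _ ⟨j.val, h⟩ ⟨j'.val, hj'⟩ hL
        (by simp only [Fin.le_def]; exact Fin.le_def.mp hle)
    · rw [fwdEntry_neg hi T k j h] at hL
      simp at hL
  red_down := by
    intro k k' j hL hle
    by_cases h : j.val < g + r - r
    · rw [fwdEntry_pos hi T k j h] at hL
      rw [fwdEntry_pos hi T k' j h]
      exact T.red_down _ ⟨k'.val + i, by have := k'.isLt; omega⟩ _ hL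
        (by simp only [Fin.le_def]; have := Fin.le_def.mp hle; omega)
    · rw [fwdEntry_neg hi T k j h] at hL
      simp at hL
  red_vals := by
    intro k j v h
    by_cases hj : j.val < g + r - r
    · rw [fwdEntry_pos hi T k j hj] at h
      exact T.red_vals _ _ v h
    · rw [fwdEntry_neg hi T k j hj] at h
      simp at h
  red_content := by
    intro v hv1 hv2
    have hc := card_rel g r i v hi hv1 hv2 T.entry (fwdEntry g r i hi T)
      (fun k j hj => fwdEntry_pos hi T k j hj)
      (fun k j hk => low_forced hi T hT k j hk)
      (by intro k j hj h; rw [fwdEntry_neg hi T k j hj] at h; simp at h)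
    have hr := T.red_content v hv1 hv2
    omega
  red_row := by
    intro k j j' a b ha hb hlt
    by_cases h : j.val < g + r - r
    · by_cases h' : j'.val < g + r - r
      · rw [fwdEntry_pos hi T k j h] at ha
        rw [fwdEntry_pos hi T k j' h'] at hb
        exact T.red_row _ _ _ a b ha hb (by simp only [Fin.lt_def]; exact Fin.lt_def.mp hlt)
      · rw [fwdEntry_neg hi T k j' h'] at hb; simp at hb
    · rw [fwdEntry_neg hi T k j h] at ha; simp at ha
  red_col := by
    intro k k' j a b ha hb hlt
    by_cases h : j.val < g + r - r
    · rw [fwdEntry_pos hi T k j h] at ha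
      rw [fwdEntry_pos hi T k' j h] at hb
      exact T.red_col _ _ _ a b ha hb
        (by simp only [Fin.lt_def]; have := Fin.lt_def.mp hlt; omega)
    · rw [fwdEntry_neg hi T k j h] at ha; simp at ha
  blue_vals := by
    intro k j v h
    by_cases hj : j.val < g + r - r
    · rw [fwdEntry_pos hi T k j hj] at h
      have h2 : v + (r - (k.val + i)) ≤ r - i := blue_bound T hT _ _ v h
      have := k.isLt
      omega
    · rw [fwdEntry_neg hi T k j hj] at h
      injection h with h'
      have := k.isLt
      omega
  blue_row := by
    intro k j j' a b ha hb hlt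
    by_cases h : j.val < g + r - r
    · by_cases h' : j'.val < g + r - r
      · rw [fwdEntry_pos hi T k j h] at ha
        rw [fwdEntry_pos hi T k j' h'] at hb
        exact T.blue_row _ _ _ a b ha hb (by simp only [Fin.lt_def]; exact Fin.lt_def.mp hlt)
      · rw [fwdEntry_neg hi T k j' h'] at hb
        injection hb with hb'
        rw [fwdEntry_pos hi T k j h] at ha
        have hbd : a + (r - (k.val + i)) ≤ r - i := blue_bound T hT _ _ a ha
        have := k.isLt
        omega
    · by_cases h' : j'.val < g + r - r
      · exact absurd (Fin.lt_def.mp hlt) (by omega)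
      · rw [fwdEntry_neg hi T k j h] at ha
        rw [fwdEntry_neg hi T k j' h'] at hb
        injection ha with ha'
        injection hb with hb'
        omega
  blue_col := by
    intro k k' j a b ha hb hlt
    by_cases h : j.val < g + r - r
    · rw [fwdEntry_pos hi T k j h] at ha
      rw [fwdEntry_pos hi T k' j h] at hb
      exact T.blue_col _ _ _ a b ha hb
        (by simp only [Fin.lt_def]; have := Fin.lt_def.mp hlt; omega)
    · rw [fwdEntry_neg hi T k j h] at ha
      rw [fwdEntry_neg hi T k' j h] at hb
      injection ha with ha'
      injection hb with hb'
      have := Fin.lt_def.mp hlt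
      omega

end StmtAux
namespace StmtAux

def bwdEntry (g r i : ℕ) (S : LTableau g (r-i) (g+r)) :
    Fin (r+1) → Fin (g+r-r) → ℕ ⊕ ℕ :=
  fun k j =>
    if k.val < i then Sum.inl (j.val + 1)
    else S.entry ⟨k.val - i, by have := k.isLt; omega⟩ ⟨j.val, by have := j.isLt; omega⟩

lemma bwdEntry_pos {g r i : ℕ} (S : LTableau g (r-i) (g+r))
    (k : Fin (r+1)) (j : Fin (g+r-r)) (h : k.val < i) :
    bwdEntry g r i S k j = Sum.inl (j.val + 1) :=
  if_pos h

lemma bwdEntry_neg {g r i : ℕ} (S : LTableau g (r-i) (g+r))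
    (k : Fin (r+1)) (j : Fin (g+r-r)) (h : ¬ k.val < i) :
    bwdEntry g r i S k j
      = S.entry ⟨k.val - i, by have := k.isLt; omega⟩ ⟨j.val, by have := j.isLt; omega⟩ :=
  if_neg h

def bwd (g r i : ℕ) (hi : i ≤ r) (S : LTableau g (r-i) (g+r)) :
    LTableau g r (g+r) where
  entry := bwdEntry g r i S
  red_left := by
    intro k j j' hL hle
    by_cases h : k.val < i
    · rw [bwdEntry_pos S k j' h]; rfl
    · rw [bwdEntry_neg S k j h] at hL
      rw [bwdEntry_neg S k j' h]
      exact S.red_left _ _ _ hL (by simp only [Fin.le_def]; exact Fin.le_def.mp hle)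
  red_down := by
    intro k k' j hL hle
    by_cases h' : k'.val < i
    · rw [bwdEntry_pos S k' j h']; rfl
    · have h : ¬ k.val < i := by have := Fin.le_def.mp hle; omega
      rw [bwdEntry_neg S k j h] at hL
      rw [bwdEntry_neg S k' j h']
      exact S.red_down _ _ _ hL
        (by simp only [Fin.le_def]; have := Fin.le_def.mp hle; omega)
  red_vals := by
    intro k j v h
    by_cases hk : k.val < i
    · rw [bwdEntry_pos S k j hk] at h
      injection h with h'
      have := j.isLt
      omega
    · rw [bwdEntry_neg S k j hk] at h
      exact S.red_vals _ _ v h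
  red_content := by
    intro v hv1 hv2
    have hc := card_rel g r i v hi hv1 hv2 (bwdEntry g r i S) S.entry
      (by
        intro k j hj
        have hk : ¬ (k.val + i < i) := by omega
        rw [bwdEntry_neg S ⟨k.val + i, by have := k.isLt; omega⟩ ⟨j.val, hj⟩ hk]
        congr 1 <;> (ext; simp)
        )
      (fun k j hk => bwdEntry_pos S k j hk)
      (by
        intro k j hj h
        exact absurd (red_col_lt S k j v h) (by have := j.isLt; omega))
    have hs := S.red_content v hv1 hv2
    omega
  red_row := by
    intro k j j' a b ha hb hlt
    by_cases hk : k.val < i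
    · rw [bwdEntry_pos S k j hk] at ha
      rw [bwdEntry_pos S k j' hk] at hb
      injection ha with ha'
      injection hb with hb'
      have := Fin.lt_def.mp hlt
      omega
    · rw [bwdEntry_neg S k j hk] at ha
      rw [bwdEntry_neg S k j' hk] at hb
      exact S.red_row _ _ _ a b ha hb (by simp only [Fin.lt_def]; exact Fin.lt_def.mp hlt)
  red_col := by
    intro k k' j a b ha hb hlt
    by_cases hk : k.val < i
    · rw [bwdEntry_pos S k j hk] at ha
      injection ha with ha'
      by_cases hk' : k'.val < i
      · rw [bwdEntry_pos S k' j hk'] at hb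
        injection hb with hb'
        omega
      · rw [bwdEntry_neg S k' j hk'] at hb
        have hlb : j.val + 1 ≤ b := red_lb S _ _ b hb
        omega
    · have hk' : ¬ k'.val < i := by have := Fin.lt_def.mp hlt; omega
      rw [bwdEntry_neg S k j hk] at ha
      rw [bwdEntry_neg S k' j hk'] at hb
      exact S.red_col _ _ _ a b ha hb
        (by simp only [Fin.lt_def]; have := Fin.lt_def.mp hlt; omega)
  blue_vals := by
    intro k j v h
    by_cases hk : k.val < i
    · rw [bwdEntry_pos S k j hk] at h; simp at h
    · rw [bwdEntry_neg S k j hk] at h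
      have := S.blue_vals _ _ v h
      omega
  blue_row := by
    intro k j j' a b ha hb hlt
    by_cases hk : k.val < i
    · rw [bwdEntry_pos S k j hk] at ha; simp at ha
    · rw [bwdEntry_neg S k j hk] at ha
      rw [bwdEntry_neg S k j' hk] at hb
      exact S.blue_row _ _ _ a b ha hb (by simp only [Fin.lt_def]; exact Fin.lt_def.mp hlt)
  blue_col := by
    intro k k' j a b ha hb hlt
    by_cases hk : k.val < i
    · rw [bwdEntry_pos S k j hk] at ha; simp at ha
    · have hk' : ¬ k'.val < i := by have := Fin.lt_def.mp hlt; omega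
      rw [bwdEntry_neg S k j hk] at ha
      rw [bwdEntry_neg S k' j hk'] at hb
      exact S.blue_col _ _ _ a b ha hb
        (by simp only [Fin.lt_def]; have := Fin.lt_def.mp hlt; omega)

lemma bwd_restricted (g r i : ℕ) (hi : i ≤ r) (S : LTableau g (r-i) (g+r)) :
    ∀ (row : Fin (r + 1)) (j : Fin (g + r - r)) (v : ℕ),
      (bwd g r i hi S).entry row j = Sum.inr v → v ≤ r - i := by
  intro k j v h
  by_cases hk : k.val < i
  · rw [show (bwd g r i hi S).entry = bwdEntry g r i S from rfl, bwdEntry_pos S k j hk] at h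
    simp at h
  · rw [show (bwd g r i hi S).entry = bwdEntry g r i S from rfl, bwdEntry_neg S k j hk] at h
    exact S.blue_vals _ _ v h

end StmtAux

namespace StmtAux

lemma bwd_fwd (g r i : ℕ) (hi : i ≤ r) (T : LTableau g r (g+r))
    (hT : ∀ (row : Fin (r + 1)) (j : Fin (g + r - r)) (v : ℕ),
      T.entry row j = Sum.inr v → v ≤ r - i) :
    (bwd g r i hi (fwd g r i hi T hT)).entry = T.entry := by
  funext k j
  show bwdEntry g r i (fwd g r i hi T hT) k j = T.entry k j
  by_cases hk : k.val < i
  · rw [bwdEntry_pos _ k j hk]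
    exact (low_forced hi T hT k j hk).symm
  · rw [bwdEntry_neg _ k j hk]
    show fwdEntry g r i hi T _ _ = T.entry k j
    rw [fwdEntry_pos hi T _ _ (show j.val < g + r - r from j.isLt)]
    congr 1 <;> (ext; simp)
    omega

lemma fwd_bwd (g r i : ℕ) (hi : i ≤ r) (S : LTableau g (r-i) (g+r)) :
    (fwd g r i hi (bwd g r i hi S) (bwd_restricted g r i hi S)).entry = S.entry := by
  funext k j
  show fwdEntry g r i hi (bwd g r i hi S) k j = S.entry k j
  by_cases hj : j.val < g + r - r
  · rw [fwdEntry_pos hi _ k j hj]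
    show bwdEntry g r i S _ _ = S.entry k j
    rw [bwdEntry_neg S _ _ (show ¬ ((⟨k.val + i, by have := k.isLt; omega⟩ : Fin (r+1)).val < i) by simp)]
    congr 1 <;> (ext; simp)
  · rw [fwdEntry_neg hi _ k j hj]
    exact (right_forced S k j (by have := j.isLt; omega)).symm

end StmtAux

/-- The number of restricted L-tableaux with parameters (g,r,g+r,i) equals the
number of L-tableaux with parameters (g,r−i,g+r). -/
theorem stmt_17 (g r i : ℕ) (hi : i ≤ r) :
    Nat.card (RestrictedLTableau g r i) = Nat.card (LTableau g (r - i) (g + r)) := by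
  refine Nat.card_congr ⟨fun T => StmtAux.fwd g r i hi T.1 T.2,
    fun S => ⟨StmtAux.bwd g r i hi S, StmtAux.bwd_restricted g r i hi S⟩, ?_, ?_⟩
  · intro T
    exact Subtype.ext (StmtAux.ltab_ext (StmtAux.bwd_fwd g r i hi T.1 T.2))
  · intro S
    exact StmtAux.ltab_ext (StmtAux.fwd_bwd g r i hi S)
end
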